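/- arXiv:2405.09254 — 10 statements merged into one kernel-verified Lean document; each statement's English description precedes it below -/
import Mathlib

section
/- For all X, Y ∈ Alt_n(F_q), the geodesic (graph) distance between X and Y in the alternating bilinear forms graph Γ(Alt_n(F_q)) equals rank(X − Y)/2. -/
open Matrix

/-- The alternating bilinear forms graph `Γ(Alt_n(F_q))`: vertices are the `n × n`
alternating matrices over the finite field `F`, and two distinct vertices are adjacent
if and only if their difference has rank `2`. -/
def altBilinearFormsGraph (F : Type*) [Field F] [Fintype F] (n : ℕ) :
    SimpleGraph {A : Matrix (Fin n) (Fin n) F // Aᵀ = -A ∧ ∀ i, A i i = 0} where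
  Adj X Y := X ≠ Y ∧ (X.1 - Y.1).rank = 2
  symm := by
    constructor
    rintro X Y ⟨hne, hrk⟩
    refine ⟨hne.symm, ?_⟩
    have h : Y.1 - X.1 = -(X.1 - Y.1) := by abel
    rw [h]
    unfold Matrix.rank
    rw [show (-(X.1 - Y.1)).mulVecLin = -(X.1 - Y.1).mulVecLin from by
      ext x; simp [Matrix.mulVecLin, Matrix.neg_mulVec]]
    rw [LinearMap.range_neg]
    exact hrk
  loopless := by constructor; rintro X ⟨h, -⟩; exact h rfl


section Helpers
open Module Submodule
variable {F : Type*} [Field F] {n : ℕ}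

lemma my_rank_add_le (A B : Matrix (Fin n) (Fin n) F) :
    (A + B).rank ≤ A.rank + B.rank := by
  have h : LinearMap.range (A + B).mulVecLin ≤
      LinearMap.range A.mulVecLin ⊔ LinearMap.range B.mulVecLin := by
    rintro _ ⟨x, rfl⟩
    rw [mulVecLin_add]
    exact Submodule.add_mem_sup ⟨x, rfl⟩ ⟨x, rfl⟩
  calc (A + B).rank ≤ finrank F ↥(LinearMap.range A.mulVecLin ⊔ LinearMap.range B.mulVecLin) :=
        Submodule.finrank_mono h
    _ ≤ A.rank + B.rank := Submodule.finrank_add_le_finrank_add_finrank _ _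


lemma my_step (D : Matrix (Fin n) (Fin n) F) (hD : Dᵀ = -D) (hdiag : ∀ k, D k k = 0)
    {i j : Fin n} (ha : D i j ≠ 0) :
    ∃ M : Matrix (Fin n) (Fin n) F, Mᵀ = -M ∧ (∀ k, M k k = 0) ∧ M.rank = 2 ∧
      (D - M).rank + 2 = D.rank := by
  set a : F := D i j with ha_def
  set u : Fin n → F := D i with hu_def
  set v : Fin n → F := D j with hv_def
  have hskew : ∀ k l, D l k = -(D k l) := by
    intro k l
    have := congrFun (congrFun hD k) l
    simpa using this
  have hui : u i = 0 := hdiag i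
  have huj : u j = a := rfl
  have hvj : v j = 0 := hdiag j
  have hvi : v i = -a := hskew i j
  set M : Matrix (Fin n) (Fin n) F := a⁻¹ • (vecMulVec u v - vecMulVec v u) with hM_def
  have hMapp : ∀ x k, (M *ᵥ x) k = a⁻¹ * (v ⬝ᵥ x) * u k - a⁻¹ * (u ⬝ᵥ x) * v k := by
    intro x k
    simp only [hM_def, mulVec, dotProduct, Matrix.smul_apply, Matrix.sub_apply,
      vecMulVec_apply, smul_eq_mul, Finset.mul_sum, Finset.sum_mul,
      ← Finset.sum_sub_distrib]
    exact Finset.sum_congr rfl fun l _ => by ring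
  set S : Submodule F (Fin n → F) := Submodule.span F {u, v} with hS_def
  have hMmem : ∀ x, M *ᵥ x ∈ S := by
    intro x
    refine Submodule.mem_span_pair.2 ⟨a⁻¹ * (v ⬝ᵥ x), -(a⁻¹ * (u ⬝ᵥ x)), ?_⟩
    funext k
    simp only [Pi.add_apply, Pi.smul_apply, smul_eq_mul]
    rw [hMapp]
    ring
  have hu_mem : u ∈ LinearMap.range D.mulVecLin := by
    refine ⟨-(Pi.single i 1), ?_⟩
    funext k
    simp only [mulVecLin_apply, Matrix.mulVec_neg, Pi.neg_apply, mulVec_single, mul_one]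
    simp [Matrix.col_apply, hskew i k, hu_def]
  have hv_mem : v ∈ LinearMap.range D.mulVecLin := by
    refine ⟨-(Pi.single j 1), ?_⟩
    funext k
    simp only [mulVecLin_apply, Matrix.mulVec_neg, Pi.neg_apply, mulVec_single, mul_one]
    simp [Matrix.col_apply, hskew j k, hv_def]
  have hS_le : S ≤ LinearMap.range D.mulVecLin := by
    rw [hS_def, Submodule.span_le]
    rintro x (rfl | rfl)
    · exact hu_mem
    · exact hv_mem
  -- alternating and zero diag for M
  have hMt : Mᵀ = -M := by
    ext k l
    simp only [hM_def, transpose_apply, Matrix.smul_apply, Matrix.sub_apply, vecMulVec_apply,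
      Matrix.neg_apply, smul_eq_mul]
    ring
  have hMdiag : ∀ k, M k k = 0 := by
    intro k
    simp only [hM_def, Matrix.smul_apply, Matrix.sub_apply, vecMulVec_apply, smul_eq_mul]
    ring
  -- rows i and j of D - M vanish
  have hDx : ∀ (x : Fin n → F) k, (D *ᵥ x) k = D k ⬝ᵥ x := fun _ _ => rfl
  have hrow_i : ∀ x : Fin n → F, ((D - M) *ᵥ x) i = 0 := by
    intro x
    rw [sub_mulVec]
    simp only [Pi.sub_apply]
    rw [hMapp, hDx]
    rw [hui, hvi]
    field_simp
    rw [hu_def]; ring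
  have hrow_j : ∀ x : Fin n → F, ((D - M) *ᵥ x) j = 0 := by
    intro x
    rw [sub_mulVec]
    simp only [Pi.sub_apply]
    rw [hMapp, hDx]
    rw [hvj, huj]
    field_simp
    rw [hv_def]; ring
  have hrange : LinearMap.range D.mulVecLin = LinearMap.range (D - M).mulVecLin ⊔ S := by
    apply le_antisymm
    · rintro _ ⟨x, rfl⟩
      have hx : D.mulVecLin x = (D - M).mulVecLin x + M *ᵥ x := by
        simp [mulVecLin_apply, sub_mulVec]
      rw [hx]
      exact Submodule.add_mem_sup ⟨x, rfl⟩ (hMmem x)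
    · refine sup_le ?_ hS_le
      rintro _ ⟨x, rfl⟩
      have hx : (D - M).mulVecLin x = D.mulVecLin x - M *ᵥ x := by
        simp [mulVecLin_apply, sub_mulVec]
      rw [hx]
      exact Submodule.sub_mem _ ⟨x, rfl⟩ (hS_le (hMmem x))
  have hinf : LinearMap.range (D - M).mulVecLin ⊓ S = ⊥ := by
    rw [eq_bot_iff]
    rintro x ⟨hx1, hx2⟩
    obtain ⟨s, t, rfl⟩ := Submodule.mem_span_pair.1 hx2
    obtain ⟨y, hy⟩ := hx1
    have hxi : s • u i + t • v i = 0 := by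
      have := hrow_i y
      rw [show (D - M) *ᵥ y = ((D - M).mulVecLin y) from rfl, hy] at this
      simpa using this
    have hxj : s • u j + t • v j = 0 := by
      have := hrow_j y
      rw [show (D - M) *ᵥ y = ((D - M).mulVecLin y) from rfl, hy] at this
      simpa using this
    rw [hui, hvi] at hxi
    rw [huj, hvj] at hxj
    have hs : s = 0 := by
      have h' : s * a = 0 := by simpa using hxj
      exact (mul_eq_zero.1 h').resolve_right ha
    have ht : t = 0 := by
      have h' : t * a = 0 := by simpa [mul_neg, neg_eq_zero] using hxi
      exact (mul_eq_zero.1 h').resolve_right ha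
    simp [hs, ht, Submodule.mem_bot]
  have hS2 : finrank F ↥S = 2 := by
    have hli : LinearIndependent F ![u, v] := by
      refine LinearIndependent.pair_iff.2 fun s t hst => ?_
      have hj := congrFun hst j
      have hi := congrFun hst i
      simp only [Pi.add_apply, Pi.smul_apply, smul_eq_mul, Pi.zero_apply, huj, hvj, hui, hvi] at hj hi
      constructor
      · have h' : s * a = 0 := by simpa using hj
        exact (mul_eq_zero.1 h').resolve_right ha
      · have h' : t * a = 0 := by simpa [mul_neg, neg_eq_zero] using hi
        exact (mul_eq_zero.1 h').resolve_right ha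
    have hcard := finrank_span_eq_card hli
    have hrg : Set.range ![u, v] = {u, v} := by
      ext x
      simp [Fin.exists_fin_two, or_comm]
    rw [hrg] at hcard
    simpa using hcard
  have hmain : (D - M).rank + 2 = D.rank := by
    have heq := Submodule.finrank_sup_add_finrank_inf_eq
      (LinearMap.range (D - M).mulVecLin) S
    rw [hinf, finrank_bot, add_zero, hS2] at heq
    show (D - M).rank + 2 = finrank F ↥(LinearMap.range D.mulVecLin)
    rw [hrange]
    exact heq.symm ▸ rfl
  have hMrank : M.rank = 2 := by
    have hle : M.rank ≤ 2 := by
      have hr : LinearMap.range M.mulVecLin ≤ S := by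
        rintro _ ⟨x, rfl⟩
        exact hMmem x
      calc M.rank ≤ finrank F ↥S := Submodule.finrank_mono hr
        _ = 2 := hS2
    have hge : 2 ≤ M.rank := by
      have : D.rank ≤ M.rank + (D - M).rank := by
        have hDd : D = M + (D - M) := by abel
        calc D.rank = (M + (D - M)).rank := by rw [← hDd]
          _ ≤ M.rank + (D - M).rank := my_rank_add_le _ _
      omega
    omega
  exact ⟨M, hMt, hMdiag, hMrank, hmain⟩



variable [Fintype F]

lemma my_walk_bound {X Y : {A : Matrix (Fin n) (Fin n) F // Aᵀ = -A ∧ ∀ i, A i i = 0}}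
    (w : (altBilinearFormsGraph F n).Walk X Y) : (X.1 - Y.1).rank ≤ 2 * w.length := by
  induction w with
  | nil => simp
  | @cons X Z Y h p ih =>
    have h2 : (X.1 - Z.1).rank = 2 := h.2
    have hsplit : X.1 - Y.1 = (X.1 - Z.1) + (Z.1 - Y.1) := by abel
    calc (X.1 - Y.1).rank ≤ (X.1 - Z.1).rank + (Z.1 - Y.1).rank := by
          rw [hsplit]; exact my_rank_add_le _ _
      _ ≤ 2 + 2 * p.length := by omega
      _ = 2 * (SimpleGraph.Walk.cons h p).length := by
          simp [SimpleGraph.Walk.length_cons]; ring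

lemma my_exists_walk :
    ∀ (r : ℕ) (X Y : {A : Matrix (Fin n) (Fin n) F // Aᵀ = -A ∧ ∀ i, A i i = 0}),
      (X.1 - Y.1).rank = r →
      ∃ k, r = 2 * k ∧ ∃ w : (altBilinearFormsGraph F n).Walk X Y, w.length = k := by
  intro r
  induction r using Nat.strong_induction_on with
  | _ r ih =>
    intro X Y hr
    by_cases h0 : X = Y
    · subst h0
      refine ⟨0, ?_, SimpleGraph.Walk.nil, rfl⟩
      simpa using hr.symm
    · have hDne : X.1 - Y.1 ≠ 0 := by
        intro h
        exact h0 (Subtype.ext (sub_eq_zero.1 h))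
      have hD : (X.1 - Y.1)ᵀ = -(X.1 - Y.1) := by
        rw [transpose_sub, X.2.1, Y.2.1]; abel
      have hdiag : ∀ k, (X.1 - Y.1) k k = 0 := fun k => by
        simp [Matrix.sub_apply, X.2.2 k, Y.2.2 k]
      obtain ⟨i, j, hij⟩ : ∃ i j, (X.1 - Y.1) i j ≠ 0 := by
        by_contra hc
        push_neg at hc
        exact hDne (by ext i j; exact hc i j)
      obtain ⟨M, hMt, hMdiag, hMrank, hcount⟩ := my_step (X.1 - Y.1) hD hdiag hij
      set Z : {A : Matrix (Fin n) (Fin n) F // Aᵀ = -A ∧ ∀ i, A i i = 0} :=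
        ⟨X.1 - M, by rw [transpose_sub, X.2.1, hMt]; abel,
          fun k => by simp [Matrix.sub_apply, X.2.2 k, hMdiag k]⟩ with hZ_def
      have hXZ : X.1 - Z.1 = M := by simp [hZ_def]
      have hAdj : (altBilinearFormsGraph F n).Adj X Z := by
        refine ⟨?_, by rw [hXZ]; exact hMrank⟩
        intro h
        rw [h] at hXZ
        simp only [sub_self] at hXZ
        rw [← hXZ, Matrix.rank_zero] at hMrank
        exact two_ne_zero hMrank.symm
      have hZYeq : Z.1 - Y.1 = (X.1 - Y.1) - M := by
        rw [hZ_def]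
        exact sub_right_comm _ _ _
      have hZY : (Z.1 - Y.1).rank = r - 2 := by
        rw [hZYeq]
        omega
      have hr2 : r - 2 < r := by omega
      obtain ⟨k, hk, w, hw⟩ := ih (r - 2) hr2 Z Y hZY
      refine ⟨k + 1, by omega, SimpleGraph.Walk.cons hAdj w, ?_⟩
      simp [SimpleGraph.Walk.length_cons, hw]


end Helpers

/-- The geodesic distance between two vertices `X, Y` of the alternating bilinear forms
graph equals `rank (X - Y) / 2`. -/
theorem geodesic_distance_eq_half_rank
    {F : Type*} [Field F] [Fintype F] {n : ℕ}
    (X Y : {A : Matrix (Fin n) (Fin n) F // Aᵀ = -A ∧ ∀ i, A i i = 0}) :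
    2 * (altBilinearFormsGraph F n).dist X Y = (X.1 - Y.1).rank := by
  obtain ⟨k, hk, w, hw⟩ := my_exists_walk ((X.1 - Y.1).rank) X Y rfl
  have hle : (altBilinearFormsGraph F n).dist X Y ≤ k := hw ▸ SimpleGraph.dist_le w
  obtain ⟨p, hp⟩ := w.reachable.exists_walk_length_eq_dist
  have hlow := my_walk_bound p
  rw [hp] at hlow
  omega
end

section
/- Let n ≥ 4 and q ≥ 2 be integers. Set θ₀ = (q^n − 1)(q^{n−1} − 1)/(q^2 − 1) and θ_r = (1 − q^{2⌊n/2⌋})/(q^2 − 1), as rational numbers. Then q^{n(n−1)/2} · (−θ_r)/(θ₀ − θ_r) = q^{(n(n−1)/(2⌊n/2⌋)) · (⌊n/2⌋ − 1)}. (In particular, the Hoffman ratio bound for the independence number of Γ(Alt_n(F_q)) equals the Singleton-like bound of Delsarte and Goethals for minimum rank distance 4.) -/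
/-- For integers `n ≥ 4` and `q ≥ 2`, with `θ₀ = (q^n − 1)(q^{n−1} − 1)/(q^2 − 1)` the
largest and `θ_r = (1 − q^{2⌊n/2⌋})/(q^2 − 1)` the smallest adjacency eigenvalue of
`Γ(Alt_n(F_q))`, the Hoffman ratio bound `q^{n(n−1)/2}·(−θ_r)/(θ₀ − θ_r)` equals the
Singleton-like bound `q^{(n(n−1)/(2⌊n/2⌋))·(⌊n/2⌋ − 1)}` for minimum rank distance `4`. -/
theorem hoffman_eq_singleton_d4 (n q : ℕ) (hn : 4 ≤ n) (hq : 2 ≤ q) :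
    (q : ℚ) ^ (n * (n - 1) / 2) *
        (-((1 - (q : ℚ) ^ (2 * (n / 2))) / ((q : ℚ) ^ 2 - 1))) /
        ((((q : ℚ) ^ n - 1) * ((q : ℚ) ^ (n - 1) - 1) / ((q : ℚ) ^ 2 - 1)) -
          (1 - (q : ℚ) ^ (2 * (n / 2))) / ((q : ℚ) ^ 2 - 1)) =
      (q : ℚ) ^ ((n * (n - 1) / (2 * (n / 2))) * (n / 2 - 1)) := by
  have hq1 : (1 : ℚ) < (q : ℚ) := by exact_mod_cast hq
  have hq0 : (q : ℚ) ≠ 0 := by positivity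
  have hB : (q : ℚ) ^ 2 - 1 ≠ 0 := by
    have : (1 : ℚ) < (q : ℚ) ^ 2 := one_lt_pow₀ hq1 (by norm_num)
    linarith
  rcases Nat.even_or_odd n with ⟨m, hm⟩ | ⟨m, hm⟩
  · -- n = m + m, m ≥ 2
    obtain ⟨k, hk⟩ : ∃ k, m = k + 2 := ⟨m - 2, by omega⟩
    have e0 : n = 2 * k + 4 := by omega
    have e1 : n - 1 = 2 * k + 3 := by omega
    have e2 : n / 2 = k + 2 := by omega
    have e3 : 2 * (n / 2) = 2 * k + 4 := by omega
    have e4 : n * (n - 1) / 2 = (k + 2) * (2 * k + 3) := by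
      rw [e1, e0, show (2 * k + 4) * (2 * k + 3) = 2 * ((k + 2) * (2 * k + 3)) by ring,
        Nat.mul_div_cancel_left _ (by norm_num)]
    have e5 : n * (n - 1) / (2 * (n / 2)) = 2 * k + 3 := by
      rw [e1, e3, e0,
        Nat.mul_div_right _ (by omega : 0 < 2 * k + 4)]
    rw [e4, e5, e3, e1, e2, e0]
    have hA : (q : ℚ) ^ (2 * k + 4) - 1 ≠ 0 := by
      have : (1 : ℚ) < (q : ℚ) ^ (2 * k + 4) := one_lt_pow₀ hq1 (by omega)
      linarith
    have hd : (((q : ℚ) ^ (2 * k + 4) - 1) * ((q : ℚ) ^ (2 * k + 3) - 1) / ((q : ℚ) ^ 2 - 1)) -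
        (1 - (q : ℚ) ^ (2 * k + 4)) / ((q : ℚ) ^ 2 - 1) =
        ((q : ℚ) ^ (2 * k + 4) - 1) * (q : ℚ) ^ (2 * k + 3) / ((q : ℚ) ^ 2 - 1) := by
      field_simp
      ring
    rw [hd]
    have hp : (q : ℚ) ^ (2 * k + 3) ≠ 0 := pow_ne_zero _ hq0
    rw [show k + 2 - 1 = k + 1 by omega]
    field_simp
    ring
  · -- n = 2 * m + 1, m ≥ 2
    obtain ⟨k, hk⟩ : ∃ k, m = k + 2 := ⟨m - 2, by omega⟩
    have e0 : n = 2 * k + 5 := by omega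
    have e1 : n - 1 = 2 * k + 4 := by omega
    have e2 : n / 2 = k + 2 := by omega
    have e3 : 2 * (n / 2) = 2 * k + 4 := by omega
    have e4 : n * (n - 1) / 2 = (2 * k + 5) * (k + 2) := by
      rw [e1, e0, show (2 * k + 5) * (2 * k + 4) = 2 * ((2 * k + 5) * (k + 2)) by ring,
        Nat.mul_div_cancel_left _ (by norm_num)]
    have e5 : n * (n - 1) / (2 * (n / 2)) = 2 * k + 5 := by
      rw [e1, e3, e0, show (2 * k + 5) * (2 * k + 4) = (2 * k + 4) * (2 * k + 5) by ring,
        Nat.mul_div_right _ (by omega : 0 < 2 * k + 4)]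
    rw [e4, e5, e3, e1, e2, e0]
    have hA : (q : ℚ) ^ (2 * k + 4) - 1 ≠ 0 := by
      have : (1 : ℚ) < (q : ℚ) ^ (2 * k + 4) := one_lt_pow₀ hq1 (by omega)
      linarith
    have hd : (((q : ℚ) ^ (2 * k + 5) - 1) * ((q : ℚ) ^ (2 * k + 4) - 1) / ((q : ℚ) ^ 2 - 1)) -
        (1 - (q : ℚ) ^ (2 * k + 4)) / ((q : ℚ) ^ 2 - 1) =
        ((q : ℚ) ^ (2 * k + 4) - 1) * (q : ℚ) ^ (2 * k + 5) / ((q : ℚ) ^ 2 - 1) := by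
      field_simp
      ring
    rw [hd]
    have hp : (q : ℚ) ^ (2 * k + 5) ≠ 0 := pow_ne_zero _ hq0
    rw [show k + 2 - 1 = k + 1 by omega]
    field_simp
    ring
end

section
/- Let n ≥ 6 and q ≥ 2 be integers. Set θ₀ = (q^n − 1)(q^{n−1} − 1)/(q^2 − 1), θ_i = P^(n)(⌊n/2⌋) and θ_{i−1} = P^(n)(⌊n/2⌋ − 1), where P^(n)(x) = (q^{2n−2x−1} − q^n − q^{n−1} + 1)/(q^2 − 1), all as rational numbers. Then q^{n(n−1)/2} · (θ₀ + θ_i·θ_{i−1}) / ((θ₀ − θ_i)(θ₀ − θ_{i−1})) = q^{(n(n−1)/(2⌊n/2⌋)) · (⌊n/2⌋ − 2)}. (In particular, the Ratio-type bound for α₂ of Γ(Alt_n(F_q)) equals the Singleton-like bound of Delsarte and Goethals for minimum rank distance 6.) -/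
/-- The eigenvalue function `P^(n)(x) = (q^{2n−2x−1} − q^n − q^{n−1} + 1)/(q^2 − 1)`. -/
def Palt (q n x : ℕ) : ℚ :=
  ((q : ℚ) ^ (2 * n - 2 * x - 1) - (q : ℚ) ^ n - (q : ℚ) ^ (n - 1) + 1) / ((q : ℚ) ^ 2 - 1)

lemma keyEven (Q A B c θ₀ θi θj : ℚ) (k : ℕ)
    (hQ : Q ≠ 0) (hc : c ≠ 0) (hA : A ≠ 0) (hB : B ≠ 0)
    (e1 : θ₀ - θi = A * Q ^ (2*k+5) / c)
    (e2 : θ₀ - θj = Q ^ (2*k+7) * B / c)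
    (e3 : θ₀ + θi * θj = A * Q ^ 2 * B / c ^ 2) :
    Q ^ ((k+3)*(2*k+5)) * (θ₀ + θi * θj) / ((θ₀ - θi) * (θ₀ - θj))
      = Q ^ ((2*k+5)*(k+1)) := by
  rw [e1, e2, e3]
  field_simp
  ring

lemma keyOdd (Q A B c θ₀ θi θj : ℚ) (k : ℕ)
    (hQ : Q ≠ 0) (hc : c ≠ 0) (hA : A ≠ 0) (hB : B ≠ 0)
    (e1 : θ₀ - θi = A * Q ^ (2*k+7) / c)
    (e2 : θ₀ - θj = Q ^ (2*k+9) * B / c)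
    (e3 : θ₀ + θi * θj = A * Q ^ 2 * B / c ^ 2) :
    Q ^ ((2*k+7)*(k+3)) * (θ₀ + θi * θj) / ((θ₀ - θi) * (θ₀ - θj))
      = Q ^ ((2*k+7)*(k+1)) := by
  rw [e1, e2, e3]
  field_simp
  ring

/-- For `n ≥ 6`, `q ≥ 2`, with `θ₀ = (q^n − 1)(q^{n−1} − 1)/(q^2 − 1)`,
`θ_i = P^(n)(⌊n/2⌋)` and `θ_{i−1} = P^(n)(⌊n/2⌋ − 1)`, the Ratio-type bound for `α₂`,
`q^{n(n−1)/2}·(θ₀ + θ_i θ_{i−1})/((θ₀ − θ_i)(θ₀ − θ_{i−1}))`, equals the Singleton-like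
bound `q^{(n(n−1)/(2⌊n/2⌋))·(⌊n/2⌋ − 2)}` for minimum rank distance `6`. -/
theorem ratioBound_eq_singleton_d6 (n q : ℕ) (hn : 6 ≤ n) (hq : 2 ≤ q) :
    (q : ℚ) ^ (n * (n - 1) / 2) *
        ((((q : ℚ) ^ n - 1) * ((q : ℚ) ^ (n - 1) - 1) / ((q : ℚ) ^ 2 - 1)) +
          Palt q n (n / 2) * Palt q n (n / 2 - 1)) /
        (((((q : ℚ) ^ n - 1) * ((q : ℚ) ^ (n - 1) - 1) / ((q : ℚ) ^ 2 - 1)) - Palt q n (n / 2)) *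
          ((((q : ℚ) ^ n - 1) * ((q : ℚ) ^ (n - 1) - 1) / ((q : ℚ) ^ 2 - 1)) -
            Palt q n (n / 2 - 1))) =
      (q : ℚ) ^ ((n * (n - 1) / (2 * (n / 2))) * (n / 2 - 2)) := by
  have hQ1 : (1 : ℚ) < (q : ℚ) := by exact_mod_cast hq
  have hQ0 : (q : ℚ) ≠ 0 := by positivity
  have hpow : ∀ m : ℕ, 1 ≤ m → (q : ℚ) ^ m - 1 ≠ 0 := by
    intro m hm
    have : (1 : ℚ) < (q : ℚ) ^ m := one_lt_pow₀ hQ1 (by omega)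
    exact sub_ne_zero.mpr (by linarith)
  have hc : (q : ℚ) ^ 2 - 1 ≠ 0 := hpow 2 (by omega)
  obtain ⟨k, hk⟩ : ∃ k, n = 2 * k + 6 ∨ n = 2 * k + 7 := ⟨(n - 6) / 2, by omega⟩
  rcases hk with hk | hk <;> subst hk <;> simp only [Palt]
  · rw [show (2*k+6) * (2*k+6-1) / (2 * ((2*k+6)/2)) * ((2*k+6)/2 - 2)
          = (2*k+5)*(k+1) from by
        rw [show (2*k+6)/2 - 2 = k+1 from by omega, show (2*k+6)/2 = k+3 from by omega,
          show 2*k+6-1 = 2*k+5 from by omega,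
          show 2*(k+3) = 2*k+6 from by ring, Nat.mul_div_cancel_left _ (by omega : 0 < 2*k+6)],
      show (2*k+6) * (2*k+6-1) / 2 = (k+3)*(2*k+5) from by
        rw [show 2*k+6-1 = 2*k+5 from by omega,
          show (2*k+6)*(2*k+5) = (k+3)*(2*k+5)*2 from by ring]
        exact Nat.mul_div_cancel _ (by omega),
      show 2*(2*k+6) - 2*((2*k+6)/2) - 1 = 2*k+5 from by omega,
      show 2*(2*k+6) - 2*((2*k+6)/2 - 1) - 1 = 2*k+7 from by omega,
      show 2*k+6-1 = 2*k+5 from by omega]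
    exact keyEven _ ((q:ℚ)^(2*k+6) - 1) ((q:ℚ)^(2*k+4) - 1) _ _ _ _ k hQ0 hc (hpow _ (by omega)) (hpow _ (by omega))
      (by rw [div_sub_div_same]; congr 1; ring)
      (by rw [div_sub_div_same]; congr 1; ring)
      (by field_simp; ring)
  · rw [show (2*k+7) * (2*k+7-1) / (2 * ((2*k+7)/2)) * ((2*k+7)/2 - 2)
          = (2*k+7)*(k+1) from by
        rw [show (2*k+7)/2 - 2 = k+1 from by omega, show (2*k+7)/2 = k+3 from by omega,
          show 2*k+7-1 = 2*k+6 from by omega,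
          show 2*(k+3) = 2*k+6 from by ring,
          Nat.mul_div_assoc _ (dvd_refl _), Nat.div_self (by omega : 0 < 2*k+6), mul_one],
      show (2*k+7) * (2*k+7-1) / 2 = (2*k+7)*(k+3) from by
        rw [show 2*k+7-1 = 2*k+6 from by omega,
          show (2*k+7)*(2*k+6) = (2*k+7)*(k+3)*2 from by ring]
        exact Nat.mul_div_cancel _ (by omega),
      show 2*(2*k+7) - 2*((2*k+7)/2) - 1 = 2*k+7 from by omega,
      show 2*(2*k+7) - 2*((2*k+7)/2 - 1) - 1 = 2*k+9 from by omega,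
      show 2*k+7-1 = 2*k+6 from by omega]
    exact keyOdd _ ((q:ℚ)^(2*k+6) - 1) ((q:ℚ)^(2*k+4) - 1) _ _ _ _ k hQ0 hc
      (hpow _ (by omega)) (hpow _ (by omega))
      (by rw [div_sub_div_same]; congr 1; ring)
      (by rw [div_sub_div_same]; congr 1; ring)
      (by field_simp; ring)
end

section
/- The number of ordered pairs (X, Y) of matrices in Alt_n(F_q) with rank(X) = 2, rank(Y) = 2 and rank(X − Y) = 2 (equivalently, the number of closed walks of length 3 in Γ(Alt_n(F_q)) starting and ending at the zero matrix, equivalently the common diagonal entry Δ of the cube of the adjacency matrix) satisfies Δ · (q^2 − 1)^2 = (q^n − 1)(q^{n−1} − 1)(q^{n+2} + q^{n+1} − q^n − q^{n−1} − q^4 − q^2 + 2). -/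
open Matrix Submodule Set
set_option linter.unusedSectionVars false
set_option maxHeartbeats 1600000

namespace AltCount

variable {F : Type*} [Field F] [Fintype F] {n : ℕ}

/-- The rank-2 alternating matrix built from two vectors. -/
def M (a b : Fin n → F) : Matrix (Fin n) (Fin n) F := vecMulVec a b - vecMulVec b a

lemma M_apply (a b : Fin n → F) (i j : Fin n) : M a b i j = a i * b j - b i * a j := rfl

lemma M_transpose (a b : Fin n → F) : (M a b)ᵀ = -(M a b) := by
  ext i j; simp [M_apply, transpose_apply]; ring

lemma M_diag (a b : Fin n → F) (i : Fin n) : M a b i i = 0 := by simp [M_apply]; ring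

lemma M_comb (a b : Fin n → F) (α β γ δ : F) :
    M (α • a + β • b) (γ • a + δ • b) = (α * δ - β * γ) • M a b := by
  ext i j; simp [M_apply, Pi.add_apply, Pi.smul_apply, smul_eq_mul, Matrix.smul_apply]; ring

lemma M_smul_left (s : F) (a b : Fin n → F) : M (s • a) b = s • M a b := by
  ext i j; simp [M_apply, smul_eq_mul, Matrix.smul_apply]; ring

lemma M_sub_right (a x y : Fin n → F) : M a (x - y) = M a x - M a y := by
  ext i j; simp [M_apply]; ring

lemma M_factor (a b : Fin n → F) : M a b = (of ![a, b])ᵀ * of ![b, -a] := by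
  ext i j
  rw [Matrix.mul_apply, Fin.sum_univ_two]
  show M a b i j = ![a,b] 0 i * ![b,-a] 0 j + ![a,b] 1 i * ![b,-a] 1 j
  simp [M_apply]; ring

lemma M_factor4 (a b c d : Fin n → F) :
    M a b - M c d = (of ![a, b, c, d])ᵀ * of ![b, -a, -d, c] := by
  ext i j
  rw [Matrix.mul_apply, Fin.sum_univ_four]
  show M a b i j - M c d i j = ![a,b,c,d] 0 i * ![b,-a,-d,c] 0 j
    + ![a,b,c,d] 1 i * ![b,-a,-d,c] 1 j + ![a,b,c,d] 2 i * ![b,-a,-d,c] 2 j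
    + ![a,b,c,d] 3 i * ![b,-a,-d,c] 3 j
  simp [M_apply, Matrix.cons_val_two, Matrix.cons_val_three]; ring

lemma rank_of_transpose_mul {m : ℕ} (v w : Fin m → Fin n → F)
    (hv : LinearIndependent F v) (hw : LinearIndependent F w) :
    ((of v)ᵀ * of w).rank = m ∧
      LinearMap.range ((of v)ᵀ * of w).mulVecLin = span F (Set.range v) := by
  have hwrange : LinearMap.range (of w).mulVecLin = ⊤ := by
    apply Submodule.eq_top_of_finrank_eq
    have h1 : (of w).rank = m := by
      rw [← Matrix.rank_transpose, Matrix.rank, Matrix.range_mulVecLin]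
      show Module.finrank F ↥(span F (Set.range w)) = m
      rw [finrank_span_eq_card hw, Fintype.card_fin]
    rw [Matrix.rank] at h1
    rw [h1, Module.finrank_fin_fun]
  have hrange : LinearMap.range ((of v)ᵀ * of w).mulVecLin = span F (Set.range v) := by
    rw [mulVecLin_mul, LinearMap.range_comp, hwrange, Submodule.map_top,
      Matrix.range_mulVecLin]
    rfl
  refine ⟨?_, hrange⟩
  rw [Matrix.rank, hrange, finrank_span_eq_card hv, Fintype.card_fin]

lemma indep_swap_neg {a b : Fin n → F} (hab : LinearIndependent F ![a, b]) :
    LinearIndependent F ![b, -a] := by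
  rw [linearIndependent_fin2] at hab ⊢
  obtain ⟨hb, hab⟩ := hab
  constructor
  · simp only [Matrix.cons_val_one, Matrix.head_cons, ne_eq, neg_eq_zero]
    intro h; exact (hab 0 (by simp at h; simp [h])).elim
  · intro s h
    simp only [Matrix.cons_val_one, Matrix.head_cons, Matrix.cons_val_zero, smul_neg] at h
    rcases eq_or_ne s 0 with rfl | hs
    · simp at h; exact hb h.symm
    · exact hab (-s⁻¹) (by rw [← h]; ext i; simp [smul_eq_mul]; field_simp)

lemma M_rank_two {a b : Fin n → F} (hab : LinearIndependent F ![a, b]) :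
    (M a b).rank = 2 := by
  rw [M_factor]; exact (rank_of_transpose_mul _ _ hab (indep_swap_neg hab)).1

lemma M_range {a b : Fin n → F} (hab : LinearIndependent F ![a, b]) :
    LinearMap.range (M a b).mulVecLin = span F (Set.range ![a, b]) := by
  rw [M_factor]; exact (rank_of_transpose_mul _ _ hab (indep_swap_neg hab)).2


lemma exists_rep {X : Matrix (Fin n) (Fin n) F} (hX : Xᵀ = -X) (hd : ∀ i, X i i = 0)
    (hr : X.rank = 2) :
    ∃ a b, LinearIndependent F ![a, b] ∧ X = M a b := by
  have hX' : ∀ i j, X j i = -X i j := fun i j => by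
    have := congrFun (congrFun hX i) j; simpa using this
  have hX0 : X ≠ 0 := by
    intro h; rw [h, Matrix.rank_zero] at hr; exact two_ne_zero hr.symm
  have hent : ∃ i j, X i j ≠ 0 := by
    by_contra h; push_neg at h
    exact hX0 (by ext i j; simpa using h i j)
  obtain ⟨i, j, hc⟩ := hent
  set u : Fin n → F := fun k => X k i with hu
  set v : Fin n → F := fun k => X k j with hv
  have hui : u i = 0 := hd i
  have huj : u j = -X i j := hX' i j
  have hvi : v i = X i j := rfl
  have hvj : v j = 0 := hd j
  have huv : LinearIndependent F ![u, v] := by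
    rw [linearIndependent_fin2]
    refine ⟨?_, ?_⟩
    · show v ≠ 0
      intro h; apply hc; rw [← hvi, h]; rfl
    · intro s h
      show False
      have h' : s • v = u := h
      have hs : s * X i j = 0 := by
        have := congrFun h' i; simpa [hui, hvi] using this
      have hs0 : s = 0 := by
        rcases mul_eq_zero.mp hs with h0 | h0
        · exact h0
        · exact absurd h0 hc
      have := congrFun h' j
      rw [hs0] at this
      simp [huj] at this
      exact hc this
  have humem : u ∈ LinearMap.range X.mulVecLin := by
    refine ⟨Pi.single i 1, ?_⟩
    show X *ᵥ Pi.single i 1 = u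
    rw [Matrix.mulVec_single]
    ext k; simp [hu]
  have hvmem : v ∈ LinearMap.range X.mulVecLin := by
    refine ⟨Pi.single j 1, ?_⟩
    show X *ᵥ Pi.single j 1 = v
    rw [Matrix.mulVec_single]
    ext k; simp [hv]
  have hle : span F (Set.range ![u, v]) ≤ LinearMap.range X.mulVecLin := by
    rw [Submodule.span_le]
    intro x hx
    simp only [Matrix.range_cons, Matrix.range_empty, Set.union_empty,
      Set.union_singleton, Set.mem_insert_iff, Set.mem_singleton_iff] at hx
    rcases hx with rfl | rfl
    · exact hvmem
    · exact humem
  have heq : LinearMap.range X.mulVecLin = span F (Set.range ![u, v]) := by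
    refine (Submodule.eq_of_le_of_finrank_le hle ?_).symm
    rw [finrank_span_eq_card huv]
    show Module.finrank F ↥(LinearMap.range X.mulVecLin) ≤ 2
    have hrr : Module.finrank F ↥(LinearMap.range X.mulVecLin) = X.rank := rfl
    rw [hrr, hr]
  have hcol : ∀ k, ∃ α β : F, α • u + β • v = fun m => X m k := by
    intro k
    have hm : (fun m => X m k) ∈ LinearMap.range X.mulVecLin := by
      refine ⟨Pi.single k 1, ?_⟩
      show X *ᵥ Pi.single k 1 = _
      rw [Matrix.mulVec_single]; ext m; simp
    rw [heq] at hm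
    have : (fun m => X m k) ∈ span F {u, v} := by
      have hrange : (Set.range ![u, v]) = {u, v} := by
        simp only [Matrix.range_cons, Matrix.range_empty, Set.union_empty,
          Set.union_singleton]
        exact Set.pair_comm v u
      rwa [hrange] at hm
    exact Submodule.mem_span_pair.mp this
  refine ⟨(X i j)⁻¹ • u, v, ?_, ?_⟩
  · rw [linearIndependent_fin2] at huv ⊢
    refine ⟨huv.1, fun s h => ?_⟩
    have h' : s • v = (X i j)⁻¹ • u := h
    have : (X i j * s) • v = u := by
      rw [mul_smul, h', ← mul_smul, mul_inv_cancel₀ hc, one_smul]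
    exact huv.2 (X i j * s) this
  · ext m k
    obtain ⟨α, β, hab⟩ := hcol k
    have hαi := congrFun hab i
    have hαj := congrFun hab j
    simp only [Pi.add_apply, Pi.smul_apply, smul_eq_mul, hui, hvi, hvj] at hαi hαj
    rw [huj] at hαj
    have hXmk : α * u m + β * v m = X m k := by
      have := congrFun hab m
      simpa only [Pi.add_apply, Pi.smul_apply, smul_eq_mul] using this
    have h1 : X j k = -v k := by rw [hv]; simp [hX' k j]
    have h2 : X i k = -u k := by rw [hu]; simp [hX' k i]
    have hA : α * X i j = v k := by linear_combination (-1 : F) * hαj - h1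
    have hB : β * X i j = -u k := by linear_combination hαi + h2
    have key : X i j * X m k = u m * v k - v m * u k := by
      linear_combination (-(X i j)) * hXmk + u m * hA + v m * hB
    rw [M_apply]
    simp only [Pi.smul_apply, smul_eq_mul]
    field_simp
    linear_combination key


lemma M_eq_zero_of_not_indep {c d : Fin n → F} (h : ¬ LinearIndependent F ![c, d]) :
    M c d = 0 := by
  rw [linearIndependent_fin2] at h
  push_neg at h
  rcases eq_or_ne (![c, d] 1) 0 with h0 | h0
  · have hd : d = 0 := h0
    ext i j; simp [M_apply, hd]
  · obtain ⟨s, hs⟩ := h h0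
    have hc : s • d = c := hs
    ext i j
    have h1 := congrFun hc i
    have h2 := congrFun hc j
    simp only [Pi.smul_apply, smul_eq_mul] at h1 h2
    simp [M_apply, ← h1, ← h2]; ring

lemma M_ne_zero {a b : Fin n → F} (hab : LinearIndependent F ![a, b]) : M a b ≠ 0 := by
  intro h
  have := M_rank_two hab
  rw [h, Matrix.rank_zero] at this
  exact two_ne_zero this.symm

lemma indep_of_M_ne_zero {c d : Fin n → F} (h : M c d ≠ 0) : LinearIndependent F ![c, d] :=
  by_contra fun hn => h (M_eq_zero_of_not_indep hn)

lemma range_pair (a b : Fin n → F) : Set.range ![a, b] = {a, b} := by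
  simp only [Matrix.range_cons, Matrix.range_empty, Set.union_empty, Set.union_singleton]
  exact Set.pair_comm b a

lemma mem_span2 {a b x : Fin n → F} :
    x ∈ span F (Set.range ![a, b]) ↔ ∃ α β : F, α • a + β • b = x := by
  rw [range_pair, Submodule.mem_span_pair]

lemma M_smul_eq_iff {a b : Fin n → F} (hab : LinearIndependent F ![a, b]) {t : F} :
    t • M a b = M a b ↔ t = 1 := by
  constructor
  · intro h
    have h1 : (t - 1) • M a b = 0 := by
      rw [sub_smul, one_smul, h, sub_self]
    rcases smul_eq_zero.mp h1 with h2 | h2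
    · exact sub_eq_zero.mp h2
    · exact absurd h2 (M_ne_zero hab)
  · rintro rfl; rw [one_smul]

lemma smul_snd_ne_fst {a b : Fin n → F} (hab : LinearIndependent F ![a, b]) (t : F) :
    t • b ≠ a := (linearIndependent_fin2.mp hab).2 t

lemma snd_ne_zero {a b : Fin n → F} (hab : LinearIndependent F ![a, b]) : b ≠ 0 :=
  (linearIndependent_fin2.mp hab).1

lemma fst_ne_zero {a b : Fin n → F} (hab : LinearIndependent F ![a, b]) : a ≠ 0 := by
  intro h
  exact smul_snd_ne_fst hab 0 (by rw [h, zero_smul])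

lemma smul_fst_ne_snd {a b : Fin n → F} (hab : LinearIndependent F ![a, b]) (t : F) :
    t • a ≠ b := by
  intro h
  rcases eq_or_ne t 0 with rfl | ht
  · exact snd_ne_zero hab (by rw [← h, zero_smul])
  · exact smul_snd_ne_fst hab t⁻¹
      (by rw [← h, ← mul_smul, inv_mul_cancel₀ ht, one_smul])

lemma no_rel {a b : Fin n → F} (hab : LinearIndependent F ![a, b]) {t s : F}
    (h : t • a = s • b) (hts : t ≠ 0 ∨ s ≠ 0) : False := by
  rcases hts with ht | hs
  · exact smul_snd_ne_fst hab (t⁻¹ * s)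
      (by rw [mul_smul, ← h, ← mul_smul, inv_mul_cancel₀ ht, one_smul])
  · exact smul_fst_ne_snd hab (s⁻¹ * t)
      (by rw [mul_smul, h, ← mul_smul, inv_mul_cancel₀ hs, one_smul])

lemma indep_of_smul_ne {a b : Fin n → F} (hb : b ≠ 0) (h : ∀ t : F, a ≠ t • b) :
    LinearIndependent F ![a, b] := by
  rw [linearIndependent_fin2]
  exact ⟨hb, fun s hs => h s hs.symm⟩

lemma indep_smul_left {a b : Fin n → F} (hab : LinearIndependent F ![a, b]) {s : F}
    (hs : s ≠ 0) : LinearIndependent F ![s • a, b] := by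
  refine indep_of_smul_ne (snd_ne_zero hab) (fun t h => ?_)
  exact no_rel hab (h.symm ▸ rfl : s • a = t • b) (Or.inl hs)

lemma left_mem_span_pair {a b : Fin n → F} : a ∈ span F (Set.range ![a, b]) :=
  Submodule.subset_span (by rw [range_pair]; left; rfl)

lemma right_mem_span_pair {a b : Fin n → F} : b ∈ span F (Set.range ![a, b]) :=
  Submodule.subset_span (by rw [range_pair]; right; rfl)

lemma span_pair_le {x y : Fin n → F} {S : Submodule F (Fin n → F)} (hx : x ∈ S)
    (hy : y ∈ S) : span F (Set.range ![x, y]) ≤ S := by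
  rw [Submodule.span_le, range_pair]
  rintro z hz
  simp only [Set.mem_insert_iff, Set.mem_singleton_iff] at hz
  rcases hz with rfl | rfl
  · exact hx
  · exact hy

lemma M_rep_with_w {a b w : Fin n → F} (hab : LinearIndependent F ![a, b])
    (hw : w ∈ span F (Set.range ![a, b])) (hw0 : w ≠ 0) :
    ∃ b₁, LinearIndependent F ![w, b₁] ∧
      span F (Set.range ![w, b₁]) = span F (Set.range ![a, b]) ∧ M a b = M w b₁ := by
  obtain ⟨α, β, hαβ⟩ := mem_span2.mp hw
  rcases eq_or_ne α 0 with rfl | hα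
  · -- w = β • b
    have hβ : β ≠ 0 := by
      intro h; apply hw0; rw [← hαβ, h]; simp
    refine ⟨(-β⁻¹) • a, ?_, ?_, ?_⟩
    · refine indep_of_smul_ne ?_ (fun t h => ?_)
      · intro h
        have : a = 0 := by
          have := congrArg (fun x => (-β) • x) h
          simpa [← mul_smul, hβ] using this
        exact fst_ne_zero hab this
      · rw [← hαβ, ← mul_smul] at h
        simp only [zero_smul, zero_add] at h
        exact no_rel hab h.symm (Or.inr hβ)
    · have hbmem : b ∈ span F (Set.range ![w, (-β⁻¹) • a]) := by
        have e : β⁻¹ • w = b := by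
          rw [← hαβ, zero_smul, zero_add, ← mul_smul, inv_mul_cancel₀ hβ, one_smul]
        have h0 := Submodule.smul_mem (span F (Set.range ![w, (-β⁻¹) • a])) β⁻¹
          (left_mem_span_pair (a := w) (b := (-β⁻¹) • a))
        rwa [e] at h0
      have hamem : a ∈ span F (Set.range ![w, (-β⁻¹) • a]) := by
        have e : (-β) • ((-β⁻¹) • a) = a := by
          rw [← mul_smul, show (-β) * (-β⁻¹) = 1 by field_simp, one_smul]
        have h0 := Submodule.smul_mem (span F (Set.range ![w, (-β⁻¹) • a])) (-β)
          (right_mem_span_pair (a := w) (b := (-β⁻¹) • a))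
        rwa [e] at h0
      exact le_antisymm (span_pair_le hw (Submodule.smul_mem _ _ left_mem_span_pair))
        (span_pair_le hamem hbmem)
    · rw [← hαβ]
      have e : (-β⁻¹) • a = (-β⁻¹) • a + (0 : F) • b := by simp
      rw [e, M_comb, show (0 * 0 - β * (-β⁻¹)) = 1 by rw [mul_neg, mul_inv_cancel₀ hβ]; ring, one_smul]
  · refine ⟨α⁻¹ • b, ?_, ?_, ?_⟩
    · refine indep_of_smul_ne ?_ (fun t h => ?_)
      · intro h
        have : b = 0 := by
          have := congrArg (fun x => α • x) h
          simpa [← mul_smul, hα] using this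
        exact snd_ne_zero hab this
      · rw [← hαβ, ← mul_smul] at h
        have h2 : α • a = (t * α⁻¹ - β) • b := by
          rw [sub_smul, ← h]; ext m
          simp only [Pi.add_apply, Pi.sub_apply]; ring
        exact no_rel hab h2 (Or.inl hα)
    · have hbmem : b ∈ span F (Set.range ![w, α⁻¹ • b]) := by
        have e : α • (α⁻¹ • b) = b := by
          rw [← mul_smul, mul_inv_cancel₀ hα, one_smul]
        have h0 := Submodule.smul_mem (span F (Set.range ![w, α⁻¹ • b])) α
          (right_mem_span_pair (a := w) (b := α⁻¹ • b))
        rwa [e] at h0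
      have hamem : a ∈ span F (Set.range ![w, α⁻¹ • b]) := by
        have e0 : w - β • b = α • a := by
          rw [← hαβ]; ext m; simp only [Pi.sub_apply, Pi.add_apply, Pi.smul_apply,
            smul_eq_mul]; ring
        have e : α⁻¹ • (w - β • b) = a := by
          rw [e0, ← mul_smul, inv_mul_cancel₀ hα, one_smul]
        have h0 := Submodule.smul_mem (span F (Set.range ![w, α⁻¹ • b])) α⁻¹
          (Submodule.sub_mem _ (left_mem_span_pair (a := w) (b := α⁻¹ • b))
            (Submodule.smul_mem _ β hbmem))
        rwa [e] at h0
      exact le_antisymm (span_pair_le hw (Submodule.smul_mem _ _ right_mem_span_pair))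
        (span_pair_le hamem hbmem)
    · rw [← hαβ]
      have e : α⁻¹ • b = (0 : F) • a + α⁻¹ • b := by simp
      rw [e, M_comb, show (α * α⁻¹ - β * 0) = 1 by rw [mul_inv_cancel₀ hα]; ring, one_smul]


lemma indep_swap4 {a b c d : Fin n → F} (h4 : LinearIndependent F ![a, b, c, d]) :
    LinearIndependent F ![b, -a, -d, c] := by
  have hperm : LinearIndependent F (![a, b, c, d] ∘ (![1, 0, 3, 2] : Fin 4 → Fin 4)) :=
    h4.comp _ (by decide)
  have hs := hperm.units_smul ![1, -1, -1, 1]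
  have he : (![1, -1, -1, 1] : Fin 4 → Fˣ) • (![a, b, c, d] ∘ (![1, 0, 3, 2] : Fin 4 → Fin 4))
      = ![b, -a, -d, c] := by
    funext i
    fin_cases i <;> simp [Function.comp, Units.smul_def]
  rwa [he] at hs

lemma rank_sub_four {a b c d : Fin n → F} (h4 : LinearIndependent F ![a, b, c, d]) :
    (M a b - M c d).rank = 4 := by
  rw [M_factor4]
  exact (rank_of_transpose_mul _ _ h4 (indep_swap4 h4)).1

lemma exists_smul_of_not_indep {w x : Fin n → F} (h : ¬ LinearIndependent F ![w, x])
    (hw0 : w ≠ 0) : ∃ t : F, x = t • w := by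
  rw [linearIndependent_fin2] at h
  push_neg at h
  rcases eq_or_ne x 0 with rfl | hx
  · exact ⟨0, by simp⟩
  · obtain ⟨s, hs⟩ := h hx
    have hs' : s • x = w := hs
    have hs0 : s ≠ 0 := by rintro rfl; rw [zero_smul] at hs'; exact hw0 hs'.symm
    exact ⟨s⁻¹, by rw [← hs', ← mul_smul, inv_mul_cancel₀ hs0, one_smul]⟩

lemma snoc3 (a b c : Fin n → F) : ![a, b, c] = Fin.snoc ![a, b] c := by
  funext i; fin_cases i <;> simp [Fin.snoc] <;> rfl

lemma snoc4 (a b c d : Fin n → F) : ![a, b, c, d] = Fin.snoc ![a, b, c] d := by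
  funext i; fin_cases i <;> simp [Fin.snoc] <;> rfl

lemma span3_le {a b c : Fin n → F} :
    span F (Set.range ![a, b, c]) ≤ span F (Set.range ![a, b]) ⊔ span F {c} := by
  rw [Submodule.span_le]
  rintro x ⟨i, rfl⟩
  fin_cases i
  · exact Submodule.mem_sup_left left_mem_span_pair
  · exact Submodule.mem_sup_left right_mem_span_pair
  · exact Submodule.mem_sup_right (Submodule.mem_span_singleton_self c)

lemma rank_sub_two_of_mid {a b c d : Fin n → F} (hab : LinearIndependent F ![a, b])
    (hcd : LinearIndependent F ![c, d])
    (hU : ¬(c ∈ span F (Set.range ![a, b]) ∧ d ∈ span F (Set.range ![a, b])))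
    (h4 : ¬ LinearIndependent F ![a, b, c, d]) : (M a b - M c d).rank = 2 := by
  have hex : ∃ w, w ≠ 0 ∧ w ∈ span F (Set.range ![a, b]) ∧ w ∈ span F (Set.range ![c, d]) := by
    by_contra hno
    push_neg at hno
    have hcnot : c ∉ span F (Set.range ![a, b]) := by
      intro hcU
      exact hno c (fst_ne_zero hcd) hcU left_mem_span_pair
    have habc : LinearIndependent F ![a, b, c] := by
      rw [snoc3, linearIndependent_fin_snoc]
      exact ⟨hab, hcnot⟩
    have hdnot : d ∉ span F (Set.range ![a, b, c]) := by
      intro hdU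
      have := span3_le hdU
      rw [Submodule.mem_sup] at this
      obtain ⟨e, he, f, hf, hefd⟩ := this
      obtain ⟨γ, hγ⟩ := Submodule.mem_span_singleton.mp hf
      have hw' : d - γ • c ∈ span F (Set.range ![a, b]) := by
        have : d - γ • c = e := by rw [← hefd, ← hγ, add_sub_cancel_right]
        rwa [this]
      have hw'' : d - γ • c ∈ span F (Set.range ![c, d]) :=
        Submodule.sub_mem _ right_mem_span_pair (Submodule.smul_mem _ _ left_mem_span_pair)
      have hne : d - γ • c ≠ 0 := fun h => smul_fst_ne_snd hcd γ (sub_eq_zero.mp h).symm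
      exact hno _ hne hw' hw''
    exact h4 (by rw [snoc4, linearIndependent_fin_snoc]; exact ⟨habc, hdnot⟩)
  obtain ⟨w, hw0, hwab, hwcd⟩ := hex
  obtain ⟨b₁, hwb₁, hspanb₁, hMab⟩ := M_rep_with_w hab hwab hw0
  obtain ⟨d₁, hwd₁, hspand₁, hMcd⟩ := M_rep_with_w hcd hwcd hw0
  have hindep : LinearIndependent F ![w, b₁ - d₁] := by
    by_contra hni
    obtain ⟨t, ht⟩ := exists_smul_of_not_indep hni hw0
    have hb₁ : b₁ ∈ span F (Set.range ![c, d]) := by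
      have hb : b₁ = t • w + d₁ := by
        rw [← ht, sub_add_cancel]
      rw [hb]
      refine Submodule.add_mem _ (Submodule.smul_mem _ _ hwcd) ?_
      rw [← hspand₁]; exact right_mem_span_pair
    have hle' : span F (Set.range ![a, b]) ≤ span F (Set.range ![c, d]) := by
      rw [← hspanb₁]; exact span_pair_le hwcd hb₁
    have heq : span F (Set.range ![a, b]) = span F (Set.range ![c, d]) :=
      Submodule.eq_of_le_of_finrank_le hle'
        (by rw [finrank_span_eq_card hab, finrank_span_eq_card hcd])
    exact hU (by rw [heq]; exact ⟨left_mem_span_pair, right_mem_span_pair⟩)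
  rw [hMab, hMcd, ← M_sub_right]
  exact M_rank_two hindep

lemma exists_scalar_of_in_U {a b c d : Fin n → F} (hcd : LinearIndependent F ![c, d])
    (hc : c ∈ span F (Set.range ![a, b])) (hd : d ∈ span F (Set.range ![a, b])) :
    ∃ t : F, t ≠ 0 ∧ M c d = t • M a b := by
  obtain ⟨α, β, hc'⟩ := mem_span2.mp hc
  obtain ⟨γ, δ, hd'⟩ := mem_span2.mp hd
  refine ⟨α * δ - β * γ, ?_, ?_⟩
  · intro h0
    apply M_ne_zero hcd
    rw [← hc', ← hd', M_comb, h0, zero_smul]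
  · rw [← hc', ← hd', M_comb]

lemma rank_sub_two_of_in_U {a b c d : Fin n → F} (hab : LinearIndependent F ![a, b])
    (hcd : LinearIndependent F ![c, d]) (hc : c ∈ span F (Set.range ![a, b]))
    (hd : d ∈ span F (Set.range ![a, b])) (hne : M c d ≠ M a b) :
    (M a b - M c d).rank = 2 := by
  obtain ⟨t, ht0, ht⟩ := exists_scalar_of_in_U hcd hc hd
  have ht1 : t ≠ 1 := by
    rintro rfl; rw [one_smul] at ht; exact hne ht
  have heq : M a b - M c d = M ((1 - t) • a) b := by
    rw [M_smul_left, ht, sub_smul, one_smul]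
  rw [heq]
  exact M_rank_two (indep_smul_left hab (sub_ne_zero.mpr (Ne.symm ht1)))


/-! ### Counting helpers -/

lemma nat_card_sigma {ι : Type*} [Fintype ι] (f : ι → Type*) [∀ i, Finite (f i)] :
    Nat.card (Σ i, f i) = ∑ i : ι, Nat.card (f i) := by
  classical
  haveI : ∀ i, Fintype (f i) := fun i => Fintype.ofFinite _
  rw [Nat.card_eq_fintype_card, Fintype.card_sigma]
  exact Finset.sum_congr rfl fun i _ => (Nat.card_eq_fintype_card).symm

lemma nat_card_sigma_const {ι : Type*} [Finite ι] (f : ι → Type*) [∀ i, Finite (f i)]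
    (c : ℕ) (h : ∀ i, Nat.card (f i) = c) :
    Nat.card (Σ i, f i) = Nat.card ι * c := by
  classical
  cases nonempty_fintype ι
  rw [nat_card_sigma]
  simp only [h, Finset.sum_const, smul_eq_mul, Nat.card_eq_fintype_card, Finset.card_univ]

variable (F n) in
lemma card_vec : Nat.card (Fin n → F) = Fintype.card F ^ n := by
  classical
  rw [Nat.card_eq_fintype_card, Fintype.card_fun, Fintype.card_fin]

lemma card_compl_submodule (S : Submodule F (Fin n → F)) {r : ℕ}
    (hr : Module.finrank F S = r) :
    Nat.card {x : Fin n → F // x ∉ S} = Fintype.card F ^ n - Fintype.card F ^ r := by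
  classical
  rw [Nat.card_eq_fintype_card, Fintype.card_subtype_compl, Fintype.card_fun,
    Fintype.card_fin]
  congr 1
  have : Fintype.card {x : Fin n → F // x ∈ S} = Fintype.card S := by
    apply Fintype.card_congr; rfl
  rw [this, Module.card_eq_pow_finrank (K := F), hr]

lemma card_submodule (S : Submodule F (Fin n → F)) {r : ℕ}
    (hr : Module.finrank F S = r) :
    Nat.card {x : Fin n → F // x ∈ S} = Fintype.card F ^ r := by
  classical
  rw [Nat.card_eq_fintype_card]
  have : Fintype.card {x : Fin n → F // x ∈ S} = Fintype.card S := by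
    apply Fintype.card_congr; rfl
  rw [this, Module.card_eq_pow_finrank (K := F), hr]

lemma card_le_submodule (S : Submodule F (Fin n → F)) {r : ℕ}
    (hr : Module.finrank F S = r) : Fintype.card F ^ r ≤ Fintype.card F ^ n := by
  classical
  have h1 : Fintype.card S = Fintype.card F ^ r := by
    rw [Module.card_eq_pow_finrank (K := F), hr]
  have h2 : Fintype.card S ≤ Fintype.card (Fin n → F) :=
    Fintype.card_le_of_injective _ Subtype.val_injective
  rw [Fintype.card_fun, Fintype.card_fin] at h2
  rw [← h1]
  exact h2

lemma indep_iff_pair {x y : Fin n → F} :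
    LinearIndependent F ![x, y] ↔ y ≠ 0 ∧ x ∉ span F {y} := by
  rw [linearIndependent_fin2]
  constructor
  · rintro ⟨h1, h2⟩
    refine ⟨h1, fun hm => ?_⟩
    obtain ⟨t, ht⟩ := Submodule.mem_span_singleton.mp hm
    exact h2 t ht
  · rintro ⟨h1, h2⟩
    refine ⟨h1, fun t ht => h2 (Submodule.mem_span_singleton.mpr ⟨t, ht⟩)⟩

lemma card_indep_pairs :
    Nat.card {p : (Fin n → F) × (Fin n → F) // LinearIndependent F ![p.1, p.2]}
      = (Fintype.card F ^ n - 1) * (Fintype.card F ^ n - Fintype.card F) := by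
  classical
  have e : {p : (Fin n → F) × (Fin n → F) // LinearIndependent F ![p.1, p.2]}
      ≃ Σ y : {y : Fin n → F // y ≠ 0}, {x : Fin n → F // x ∉ span F {y.1}} :=
    { toFun := fun p => ⟨⟨p.1.2, (indep_iff_pair.mp p.2).1⟩, ⟨p.1.1, (indep_iff_pair.mp p.2).2⟩⟩
      invFun := fun s => ⟨(s.2.1, s.1.1), indep_iff_pair.mpr ⟨s.1.2, s.2.2⟩⟩
      left_inv := fun p => rfl
      right_inv := fun s => rfl }
  rw [Nat.card_congr e]
  rw [nat_card_sigma_const _ (Fintype.card F ^ n - Fintype.card F)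
    (fun y => by rw [card_compl_submodule _ (finrank_span_singleton y.2), pow_one])]
  congr 1
  rw [Nat.card_eq_fintype_card, Fintype.card_subtype_compl, Fintype.card_fun,
    Fintype.card_fin, Fintype.card_subtype_eq]

lemma card_det_fiber (x : Fin 2 → F) (hx : x ≠ 0) :
    Nat.card {y : Fin 2 → F // x 0 * y 1 - x 1 * y 0 = 1} = Fintype.card F := by
  classical
  rcases eq_or_ne (x 0) 0 with h0 | h0
  · have h1 : x 1 ≠ 0 := by
      intro h1; apply hx; funext i; fin_cases i <;> assumption
    have e : {y : Fin 2 → F // x 0 * y 1 - x 1 * y 0 = 1} ≃ F :=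
      { toFun := fun y => y.1 1
        invFun := fun t => ⟨![-(x 1)⁻¹, t], by
          show x 0 * t - x 1 * (-(x 1)⁻¹) = 1
          rw [h0, zero_mul, zero_sub, mul_neg, mul_inv_cancel₀ h1, neg_neg]⟩
        left_inv := fun y => by
          ext i
          fin_cases i
          · show -(x 1)⁻¹ = y.1 0
            have hy := y.2
            have hy' : x 1 * y.1 0 = -1 := by linear_combination -hy + y.1 1 * h0
            have h2 := congrArg (fun z => (x 1)⁻¹ * z) hy'
            rw [← mul_assoc, inv_mul_cancel₀ h1, one_mul, mul_neg, mul_one] at h2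
            exact h2.symm
          · rfl
        right_inv := fun t => rfl }
    rw [Nat.card_congr e, Nat.card_eq_fintype_card]
  · have e : {y : Fin 2 → F // x 0 * y 1 - x 1 * y 0 = 1} ≃ F :=
      { toFun := fun y => y.1 0
        invFun := fun t => ⟨![t, (1 + x 1 * t) * (x 0)⁻¹], by
          show x 0 * ((1 + x 1 * t) * (x 0)⁻¹) - x 1 * t = 1
          rw [mul_comm (x 0), mul_assoc, inv_mul_cancel₀ h0, mul_one]
          ring⟩
        left_inv := fun y => by
          ext i
          fin_cases i
          · rfl
          · show (1 + x 1 * y.1 0) * (x 0)⁻¹ = y.1 1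
            have hy := y.2
            rw [mul_inv_eq_iff_eq_mul₀ h0]
            linear_combination -hy
        right_inv := fun t => rfl }
    rw [Nat.card_congr e, Nat.card_eq_fintype_card]

lemma card_det_one :
    Nat.card {z : (Fin 2 → F) × (Fin 2 → F) // z.1 0 * z.2 1 - z.1 1 * z.2 0 = 1}
      = (Fintype.card F ^ 2 - 1) * Fintype.card F := by
  classical
  have e := Equiv.subtypeProdEquivSigmaSubtype
    (fun (x y : Fin 2 → F) => x 0 * y 1 - x 1 * y 0 = 1)
  rw [Nat.card_congr e, nat_card_sigma]
  have hval : ∀ x : Fin 2 → F,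
      Nat.card {y : Fin 2 → F // x 0 * y 1 - x 1 * y 0 = 1}
        = if x = 0 then 0 else Fintype.card F := by
    intro x
    split_ifs with hx
    · subst hx
      rw [Nat.card_eq_zero]
      left
      refine ⟨fun y => ?_⟩
      have := y.2
      simp at this
    · exact card_det_fiber x hx
  rw [Finset.sum_congr rfl (fun x _ => hval x), Finset.sum_ite, Finset.sum_const,
    Finset.sum_const]
  have h1 : (Finset.filter (fun x : Fin 2 → F => ¬x = 0) Finset.univ) = Finset.univ.erase 0 := by
    rw [← Finset.filter_ne']
  rw [h1, Finset.card_erase_of_mem (Finset.mem_univ _), Finset.card_univ, Fintype.card_fun,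
    Fintype.card_fin]
  simp [mul_comm]

lemma coeff_inj {a b : Fin n → F} (hab : LinearIndependent F ![a, b]) {α β α' β' : F}
    (h : α • a + β • b = α' • a + β' • b) : α = α' ∧ β = β' := by
  have h1 : (α - α') • a = (β' - β) • b := by
    ext m
    have := congrFun h m
    simp only [Pi.add_apply, Pi.smul_apply, smul_eq_mul] at this ⊢
    linear_combination this
  have hα : α = α' := by
    by_contra hne
    exact no_rel hab h1 (Or.inl (sub_ne_zero.mpr hne))
  refine ⟨hα, ?_⟩
  have h2 : (β' - β) • b = 0 := by
    rw [← h1, hα, sub_self, zero_smul]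
  rcases smul_eq_zero.mp h2 with h3 | h3
  · exact (sub_eq_zero.mp h3).symm
  · exact absurd h3 (snd_ne_zero hab)

lemma card_M_fiber {a b : Fin n → F} (hab : LinearIndependent F ![a, b]) :
    Nat.card {p : (Fin n → F) × (Fin n → F) // M p.1 p.2 = M a b}
      = (Fintype.card F ^ 2 - 1) * Fintype.card F := by
  rw [← card_det_one (F := F)]
  refine (Nat.card_congr (Equiv.ofBijective
    (fun z => ⟨(z.1.1 0 • a + z.1.1 1 • b, z.1.2 0 • a + z.1.2 1 • b), by
      rw [M_comb, z.2, one_smul]⟩ :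
      {z : (Fin 2 → F) × (Fin 2 → F) // z.1 0 * z.2 1 - z.1 1 * z.2 0 = 1}
        → {p : (Fin n → F) × (Fin n → F) // M p.1 p.2 = M a b})
    ⟨?_, ?_⟩)).symm
  · intro z z' h
    have h1 : z.1.1 0 • a + z.1.1 1 • b = z'.1.1 0 • a + z'.1.1 1 • b :=
      congrArg (fun r => r.1.1) h
    have h2 : z.1.2 0 • a + z.1.2 1 • b = z'.1.2 0 • a + z'.1.2 1 • b :=
      congrArg (fun r => r.1.2) h
    obtain ⟨e1, e2⟩ := coeff_inj hab h1
    obtain ⟨e3, e4⟩ := coeff_inj hab h2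
    apply Subtype.ext
    apply Prod.ext
    · funext i; fin_cases i <;> assumption
    · funext i; fin_cases i <;> assumption
  · rintro ⟨⟨c, d⟩, hM⟩
    have hM0 : M c d ≠ 0 := by rw [hM]; exact M_ne_zero hab
    have hcd : LinearIndependent F ![c, d] := indep_of_M_ne_zero hM0
    have hspan : span F (Set.range ![c, d]) = span F (Set.range ![a, b]) := by
      rw [← M_range hcd, ← M_range hab, hM]
    have hc : c ∈ span F (Set.range ![a, b]) := by
      rw [← hspan]; exact left_mem_span_pair
    have hd : d ∈ span F (Set.range ![a, b]) := by
      rw [← hspan]; exact right_mem_span_pair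
    obtain ⟨α, β, hαβ⟩ := mem_span2.mp hc
    obtain ⟨γ, δ, hγδ⟩ := mem_span2.mp hd
    have hdet : α * δ - β * γ = 1 := by
      have : M c d = (α * δ - β * γ) • M a b := by
        rw [← hαβ, ← hγδ, M_comb]
      rw [hM] at this
      exact (M_smul_eq_iff hab).mp this.symm
    refine ⟨⟨(![α, β], ![γ, δ]), by simpa using hdet⟩, ?_⟩
    apply Subtype.ext
    apply Prod.ext
    · show ![α, β] 0 • a + ![α, β] 1 • b = c
      simpa using hαβ
    · show ![γ, δ] 0 • a + ![γ, δ] 1 • b = d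
      simpa using hγδ

lemma indep4_iff {a b c d : Fin n → F} (hab : LinearIndependent F ![a, b]) :
    LinearIndependent F ![a, b, c, d] ↔
      c ∉ span F (Set.range ![a, b]) ∧ d ∉ span F (Set.range ![a, b, c]) := by
  rw [snoc4, linearIndependent_fin_snoc, snoc3, linearIndependent_fin_snoc]
  constructor
  · rintro ⟨⟨_, h1⟩, h2⟩; exact ⟨h1, h2⟩
  · rintro ⟨h1, h2⟩; exact ⟨⟨hab, h1⟩, h2⟩

lemma indep_abc {a b c : Fin n → F} (hab : LinearIndependent F ![a, b])
    (hc : c ∉ span F (Set.range ![a, b])) : LinearIndependent F ![a, b, c] := by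
  rw [snoc3, linearIndependent_fin_snoc]; exact ⟨hab, hc⟩

lemma indep_pair_of_indep4 {a b c d : Fin n → F} (h4 : LinearIndependent F ![a, b, c, d]) :
    LinearIndependent F ![c, d] := by
  have h := h4.comp (![2, 3] : Fin 2 → Fin 4) (by decide)
  have he : ![a, b, c, d] ∘ (![2, 3] : Fin 2 → Fin 4) = ![c, d] := by
    funext i; fin_cases i <;> rfl
  rwa [he] at h

lemma card_indep4 {a b : Fin n → F} (hab : LinearIndependent F ![a, b]) :
    Nat.card {p : (Fin n → F) × (Fin n → F) // LinearIndependent F ![a, b, p.1, p.2]}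
      = (Fintype.card F ^ n - Fintype.card F ^ 2) *
        (Fintype.card F ^ n - Fintype.card F ^ 3) := by
  classical
  have e : {p : (Fin n → F) × (Fin n → F) // LinearIndependent F ![a, b, p.1, p.2]}
      ≃ Σ c : {c : Fin n → F // c ∉ span F (Set.range ![a, b])},
          {d : Fin n → F // d ∉ span F (Set.range ![a, b, c.1])} :=
    { toFun := fun p => ⟨⟨p.1.1, ((indep4_iff hab).mp p.2).1⟩,
        ⟨p.1.2, ((indep4_iff hab).mp p.2).2⟩⟩
      invFun := fun s => ⟨(s.1.1, s.2.1), (indep4_iff hab).mpr ⟨s.1.2, s.2.2⟩⟩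
      left_inv := fun p => rfl
      right_inv := fun s => rfl }
  rw [Nat.card_congr e, nat_card_sigma_const _ (Fintype.card F ^ n - Fintype.card F ^ 3)
    (fun c => by
      refine card_compl_submodule _ ?_
      rw [finrank_span_eq_card (indep_abc hab c.2), Fintype.card_fin]),
    card_compl_submodule _ (by rw [finrank_span_eq_card hab, Fintype.card_fin])]

lemma card_three_split {α : Type*} [Fintype α] (P Q1 Q2 Q3 : α → Prop)
    (hiff : ∀ x, P x ↔ (Q1 x ∨ Q2 x ∨ Q3 x))
    (h12 : ∀ x, Q1 x → Q2 x → False)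
    (h13 : ∀ x, Q1 x → Q3 x → False)
    (h23 : ∀ x, Q2 x → Q3 x → False) :
    Nat.card {x // P x}
      = Nat.card {x // Q1 x} + Nat.card {x // Q2 x} + Nat.card {x // Q3 x} := by
  classical
  simp only [Nat.card_eq_fintype_card, Fintype.card_subtype]
  have hun : Finset.filter P Finset.univ
      = Finset.filter Q1 Finset.univ ∪ (Finset.filter Q2 Finset.univ ∪
        Finset.filter Q3 Finset.univ) := by
    ext x
    simp only [Finset.mem_filter, Finset.mem_union, Finset.mem_univ, true_and]
    exact hiff x
  have hd23 : Disjoint (Finset.filter Q2 Finset.univ) (Finset.filter Q3 Finset.univ) := by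
    rw [Finset.disjoint_left]
    intro x hx hx'
    simp only [Finset.mem_filter, Finset.mem_univ, true_and] at hx hx'
    exact h23 x hx hx'
  have hd123 : Disjoint (Finset.filter Q1 Finset.univ)
      (Finset.filter Q2 Finset.univ ∪ Finset.filter Q3 Finset.univ) := by
    rw [Finset.disjoint_left]
    intro x hx hx'
    simp only [Finset.mem_filter, Finset.mem_union, Finset.mem_univ, true_and] at hx hx'
    rcases hx' with h | h
    · exact h12 x hx h
    · exact h13 x hx h
  rw [hun, Finset.card_union_of_disjoint hd123, Finset.card_union_of_disjoint hd23, add_assoc]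

lemma per_pair {a b : Fin n → F} (hab : LinearIndependent F ![a, b]) :
    (Fintype.card F ^ n - 1) * (Fintype.card F ^ n - Fintype.card F)
      = Nat.card {p : (Fin n → F) × (Fin n → F) //
            LinearIndependent F ![p.1, p.2] ∧ (M a b - M p.1 p.2).rank = 2}
        + ((Fintype.card F ^ 2 - 1) * Fintype.card F
        + (Fintype.card F ^ n - Fintype.card F ^ 2) *
          (Fintype.card F ^ n - Fintype.card F ^ 3)) := by
  classical
  have hsplit := card_three_split
    (fun p : (Fin n → F) × (Fin n → F) => LinearIndependent F ![p.1, p.2])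
    (fun p => LinearIndependent F ![p.1, p.2] ∧ (M a b - M p.1 p.2).rank = 2)
    (fun p => M p.1 p.2 = M a b)
    (fun p => LinearIndependent F ![a, b, p.1, p.2])
    (fun p => by
      constructor
      · intro hp
        by_cases h4 : LinearIndependent F ![a, b, p.1, p.2]
        · exact Or.inr (Or.inr h4)
        · by_cases hU : p.1 ∈ span F (Set.range ![a, b]) ∧ p.2 ∈ span F (Set.range ![a, b])
          · by_cases hMeq : M p.1 p.2 = M a b
            · exact Or.inr (Or.inl hMeq)
            · exact Or.inl ⟨hp, rank_sub_two_of_in_U hab hp hU.1 hU.2 hMeq⟩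
          · exact Or.inl ⟨hp, rank_sub_two_of_mid hab hp hU h4⟩
      · intro hp
        rcases hp with h | h | h
        · exact h.1
        · exact indep_of_M_ne_zero (by rw [h]; exact M_ne_zero hab)
        · exact indep_pair_of_indep4 h)
    (fun p h1 h2 => by
      have h1' : (M a b - M p.1 p.2).rank = 2 := h1.2
      have h2' : M p.1 p.2 = M a b := h2
      rw [h2', sub_self, Matrix.rank_zero] at h1'
      exact two_ne_zero h1'.symm)
    (fun p h1 h3 => by
      have h1' : (M a b - M p.1 p.2).rank = 2 := h1.2
      have h4 := rank_sub_four h3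
      rw [h1'] at h4
      norm_num at h4)
    (fun p h2 h3 => by
      have h2' : M p.1 p.2 = M a b := h2
      have hcd : LinearIndependent F ![p.1, p.2] :=
        indep_of_M_ne_zero (by rw [h2']; exact M_ne_zero hab)
      have hspan : span F (Set.range ![p.1, p.2]) = span F (Set.range ![a, b]) := by
        rw [← M_range hcd, ← M_range hab, h2']
      have hc : p.1 ∈ span F (Set.range ![a, b]) := by
        rw [← hspan]; exact left_mem_span_pair
      exact ((indep4_iff hab).mp h3).1 hc)
  rw [← card_indep_pairs]
  rw [hsplit, card_M_fiber hab, card_indep4 hab, add_assoc]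

lemma E_eq_left :
    Nat.card {r : ((Fin n → F) × (Fin n → F)) × ((Fin n → F) × (Fin n → F)) //
        LinearIndependent F ![r.1.1, r.1.2] ∧ LinearIndependent F ![r.2.1, r.2.2] ∧
          (M r.1.1 r.1.2 - M r.2.1 r.2.2).rank = 2}
      = (Fintype.card F ^ n - 1) * (Fintype.card F ^ n - Fintype.card F) *
        ((Fintype.card F ^ n - 1) * (Fintype.card F ^ n - Fintype.card F)
          - ((Fintype.card F ^ 2 - 1) * Fintype.card F
            + (Fintype.card F ^ n - Fintype.card F ^ 2) *
              (Fintype.card F ^ n - Fintype.card F ^ 3))) := by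
  classical
  have e : {r : ((Fin n → F) × (Fin n → F)) × ((Fin n → F) × (Fin n → F)) //
        LinearIndependent F ![r.1.1, r.1.2] ∧ LinearIndependent F ![r.2.1, r.2.2] ∧
          (M r.1.1 r.1.2 - M r.2.1 r.2.2).rank = 2} ≃
      Σ s : {p : (Fin n → F) × (Fin n → F) // LinearIndependent F ![p.1, p.2]},
        {p : (Fin n → F) × (Fin n → F) //
          LinearIndependent F ![p.1, p.2] ∧ (M s.1.1 s.1.2 - M p.1 p.2).rank = 2} :=
    { toFun := fun r => ⟨⟨r.1.1, r.2.1⟩, ⟨r.1.2, r.2.2.1, r.2.2.2⟩⟩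
      invFun := fun s => ⟨(s.1.1, s.2.1), s.1.2, s.2.2.1, s.2.2.2⟩
      left_inv := fun r => rfl
      right_inv := fun s => rfl }
  rw [Nat.card_congr e, nat_card_sigma_const _
    ((Fintype.card F ^ n - 1) * (Fintype.card F ^ n - Fintype.card F)
      - ((Fintype.card F ^ 2 - 1) * Fintype.card F
        + (Fintype.card F ^ n - Fintype.card F ^ 2) *
          (Fintype.card F ^ n - Fintype.card F ^ 3)))
    (fun s => by have := per_pair s.2; omega), card_indep_pairs]

lemma rank_two_ne_zero {X : Matrix (Fin n) (Fin n) F} (h : X.rank = 2) : X ≠ 0 := by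
  rintro rfl
  rw [Matrix.rank_zero] at h
  exact two_ne_zero h.symm

lemma E_eq_right :
    Nat.card {r : ((Fin n → F) × (Fin n → F)) × ((Fin n → F) × (Fin n → F)) //
        LinearIndependent F ![r.1.1, r.1.2] ∧ LinearIndependent F ![r.2.1, r.2.2] ∧
          (M r.1.1 r.1.2 - M r.2.1 r.2.2).rank = 2}
    = Nat.card {P : Matrix (Fin n) (Fin n) F × Matrix (Fin n) (Fin n) F //
        (P.1ᵀ = -P.1 ∧ ∀ i, P.1 i i = 0) ∧ (P.2ᵀ = -P.2 ∧ ∀ i, P.2 i i = 0) ∧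
        P.1.rank = 2 ∧ P.2.rank = 2 ∧ (P.1 - P.2).rank = 2} *
      ((Fintype.card F ^ 2 - 1) * Fintype.card F *
        ((Fintype.card F ^ 2 - 1) * Fintype.card F)) := by
  classical
  let f : {r : ((Fin n → F) × (Fin n → F)) × ((Fin n → F) × (Fin n → F)) //
        LinearIndependent F ![r.1.1, r.1.2] ∧ LinearIndependent F ![r.2.1, r.2.2] ∧
          (M r.1.1 r.1.2 - M r.2.1 r.2.2).rank = 2} →
      {P : Matrix (Fin n) (Fin n) F × Matrix (Fin n) (Fin n) F //
        (P.1ᵀ = -P.1 ∧ ∀ i, P.1 i i = 0) ∧ (P.2ᵀ = -P.2 ∧ ∀ i, P.2 i i = 0) ∧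
        P.1.rank = 2 ∧ P.2.rank = 2 ∧ (P.1 - P.2).rank = 2} := fun r =>
    ⟨(M r.1.1.1 r.1.1.2, M r.1.2.1 r.1.2.2),
      ⟨M_transpose _ _, M_diag _ _⟩, ⟨M_transpose _ _, M_diag _ _⟩,
      M_rank_two r.2.1, M_rank_two r.2.2.1, r.2.2.2⟩
  rw [Nat.card_congr (Equiv.sigmaFiberEquiv f).symm, nat_card_sigma_const _
    ((Fintype.card F ^ 2 - 1) * Fintype.card F *
      ((Fintype.card F ^ 2 - 1) * Fintype.card F)) (fun t => ?_)]
  have efib : {r // f r = t} ≃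
      ({p : (Fin n → F) × (Fin n → F) // M p.1 p.2 = t.1.1} ×
       {p : (Fin n → F) × (Fin n → F) // M p.1 p.2 = t.1.2}) :=
    { toFun := fun rr =>
        (⟨rr.1.1.1, congrArg Prod.fst (congrArg Subtype.val rr.2)⟩,
         ⟨rr.1.1.2, congrArg Prod.snd (congrArg Subtype.val rr.2)⟩)
      invFun := fun pp =>
        ⟨⟨(pp.1.1, pp.2.1),
          indep_of_M_ne_zero (pp.1.2.symm ▸ rank_two_ne_zero t.2.2.2.1),
          indep_of_M_ne_zero (pp.2.2.symm ▸ rank_two_ne_zero t.2.2.2.2.1),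
          by rw [pp.1.2, pp.2.2]; exact t.2.2.2.2.2⟩,
         Subtype.ext (Prod.ext pp.1.2 pp.2.2)⟩
      left_inv := fun rr => by
        apply Subtype.ext
        apply Subtype.ext
        rfl
      right_inv := fun pp => by
        apply Prod.ext <;> apply Subtype.ext <;> rfl }
  rw [Nat.card_congr efib, Nat.card_prod]
  obtain ⟨a1, b1, hab1, hX1⟩ := exists_rep t.2.1.1 t.2.1.2 t.2.2.2.1
  obtain ⟨a2, b2, hab2, hX2⟩ := exists_rep t.2.2.1.1 t.2.2.1.2 t.2.2.2.2.1
  rw [show t.1.1 = M a1 b1 from hX1, show t.1.2 = M a2 b2 from hX2,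
    card_M_fiber hab1, card_M_fiber hab2]

end AltCount

/-- The common diagonal entry `Δ` of the cube of the adjacency matrix of `Γ(Alt_n(F_q))`,
i.e. the number of ordered pairs `(X, Y)` of alternating matrices with
`rank X = 2`, `rank Y = 2` and `rank (X − Y) = 2`, satisfies
`Δ·(q² − 1)² = (q^n − 1)(q^{n−1} − 1)(q^{n+2} + q^{n+1} − q^n − q^{n−1} − q^4 − q^2 + 2)`. -/
theorem closed_three_walks_altGraph
    {F : Type*} [Field F] [Fintype F] {n : ℕ} :
    (Nat.card {P : Matrix (Fin n) (Fin n) F × Matrix (Fin n) (Fin n) F //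
        (P.1ᵀ = -P.1 ∧ ∀ i, P.1 i i = 0) ∧ (P.2ᵀ = -P.2 ∧ ∀ i, P.2 i i = 0) ∧
        P.1.rank = 2 ∧ P.2.rank = 2 ∧ (P.1 - P.2).rank = 2} : ℚ) *
      ((Fintype.card F : ℚ) ^ 2 - 1) ^ 2 =
    ((Fintype.card F : ℚ) ^ n - 1) * ((Fintype.card F : ℚ) ^ (n - 1) - 1) *
      ((Fintype.card F : ℚ) ^ (n + 2) + (Fintype.card F : ℚ) ^ (n + 1) -
        (Fintype.card F : ℚ) ^ n - (Fintype.card F : ℚ) ^ (n - 1) -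
        (Fintype.card F : ℚ) ^ 4 - (Fintype.card F : ℚ) ^ 2 + 2) := by
  classical
  rcases Nat.lt_or_ge n 2 with hn | hn
  · have h0 : Nat.card {P : Matrix (Fin n) (Fin n) F × Matrix (Fin n) (Fin n) F //
        (P.1ᵀ = -P.1 ∧ ∀ i, P.1 i i = 0) ∧ (P.2ᵀ = -P.2 ∧ ∀ i, P.2 i i = 0) ∧
        P.1.rank = 2 ∧ P.2.rank = 2 ∧ (P.1 - P.2).rank = 2} = 0 := by
      rw [Nat.card_eq_zero]
      left
      refine ⟨fun P => ?_⟩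
      obtain ⟨a, b, hab, -⟩ := AltCount.exists_rep P.2.1.1 P.2.1.2 P.2.2.2.1
      have h2 := hab.fintype_card_le_finrank
      rw [Fintype.card_fin, Module.finrank_fin_fun] at h2
      omega
    rw [h0]
    interval_cases n
    · norm_num
    · norm_num
  · obtain ⟨k, rfl⟩ : ∃ k, n = k + 2 := ⟨n - 2, by omega⟩
    set q := Fintype.card F with hqdef
    have hq2 : 2 ≤ q := Fintype.one_lt_card
    have hab : LinearIndependent F
        ![(Pi.single 0 1 : Fin (k + 2) → F), Pi.single 1 1] := by
      have h01 : (0 : Fin (k + 2)) ≠ 1 := by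
        intro h
        have := congrArg Fin.val h
        simp [Fin.val_one] at this
      refine AltCount.indep_of_smul_ne ?_ ?_
      · intro h
        have h1 := congrFun h 1
        rw [Pi.single_eq_same] at h1
        exact one_ne_zero (h1.trans rfl)
      · intro t h
        have h1 := congrFun h 0
        rw [Pi.single_eq_same] at h1
        have h2 : (Pi.single 1 1 : Fin (k + 2) → F) 0 = 0 :=
          Pi.single_eq_of_ne h01 1
        rw [Pi.smul_apply, h2, smul_eq_mul, mul_zero] at h1
        exact one_ne_zero h1
    have hEL := AltCount.E_eq_left (F := F) (n := k + 2)
    have hER := AltCount.E_eq_right (F := F) (n := k + 2)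
    have hper := AltCount.per_pair hab
    set A := (q ^ (k + 2) - 1) * (q ^ (k + 2) - q) with hA
    set B1 := (q ^ 2 - 1) * q with hB1
    set B2 := (q ^ (k + 2) - q ^ 2) * (q ^ (k + 2) - q ^ 3) with hB2
    have hmain : Nat.card {P : Matrix (Fin (k+2)) (Fin (k+2)) F ×
          Matrix (Fin (k+2)) (Fin (k+2)) F //
        (P.1ᵀ = -P.1 ∧ ∀ i, P.1 i i = 0) ∧ (P.2ᵀ = -P.2 ∧ ∀ i, P.2 i i = 0) ∧
        P.1.rank = 2 ∧ P.2.rank = 2 ∧ (P.1 - P.2).rank = 2} * (B1 * B1)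
        = A * (A - (B1 + B2)) := by
      rw [← hER, hEL]
    have hsub : B1 + B2 ≤ A := by omega
    have h1q : 1 ≤ q ^ (k + 2) := Nat.one_le_pow _ _ (by omega)
    have hqq : q ≤ q ^ (k + 2) := by
      calc q = q ^ 1 := (pow_one q).symm
      _ ≤ q ^ (k + 2) := Nat.pow_le_pow_right (by omega) (by omega)
    have h1q2 : 1 ≤ q ^ 2 := Nat.one_le_pow _ _ (by omega)
    have hq2q : q ^ 2 ≤ q ^ (k + 2) := Nat.pow_le_pow_right (by omega) (by omega)
    have cA : (A : ℚ) = ((q : ℚ) ^ (k + 2) - 1) * ((q : ℚ) ^ (k + 2) - q) := by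
      rw [hA, Nat.cast_mul, Nat.cast_sub h1q, Nat.cast_sub hqq]
      push_cast
      ring
    have cB1 : (B1 : ℚ) = ((q : ℚ) ^ 2 - 1) * q := by
      rw [hB1, Nat.cast_mul, Nat.cast_sub h1q2]
      push_cast
      ring
    have cB2 : (B2 : ℚ) = ((q : ℚ) ^ (k + 2) - (q : ℚ) ^ 2) *
        ((q : ℚ) ^ (k + 2) - (q : ℚ) ^ 3) := by
      rcases Nat.eq_zero_or_pos k with rfl | hk
      · have : q ^ (0 + 2) - q ^ 2 = 0 := by
          show q ^ 2 - q ^ 2 = 0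
          omega
        rw [hB2, this, zero_mul, Nat.cast_zero]
        have : ((q : ℚ) ^ (0 + 2) - (q : ℚ) ^ 2) = 0 := by norm_num
        rw [this, zero_mul]
      · have hq3 : q ^ 3 ≤ q ^ (k + 2) := Nat.pow_le_pow_right (by omega) (by omega)
        rw [hB2, Nat.cast_mul, Nat.cast_sub hq2q, Nat.cast_sub hq3]
        push_cast
        ring
    have hQmain := congrArg (fun x : ℕ => (x : ℚ)) hmain
    simp only [Nat.cast_mul] at hQmain
    rw [Nat.cast_sub hsub, Nat.cast_add, cA, cB1, cB2] at hQmain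
    have hQne : (q : ℚ) ≠ 0 := Nat.cast_ne_zero.mpr (by omega)
    have hc : k + 2 - 1 = k + 1 := rfl
    rw [hc]
    apply mul_right_cancel₀ (pow_ne_zero 2 hQne)
    linear_combination hQmain
end

section
/- Let n ≥ 6 and q ≥ 2 be integers. Set P^(n)(x) = (q^{2n−2x−1} − q^n − q^{n−1} + 1)/(q^2 − 1) and t_n = (q^2(q^{n−2} − 1)(q^{n−3} − 1) − q^{2⌊n/2⌋−2} + 1)/(q^{2⌊n/2⌋−2} − 1), as rational numbers. Then P^(n)(⌊n/2⌋ − 2) ≥ t_n > P^(n)(⌊n/2⌋ − 1); consequently, with the eigenvalues ordered as θ_x = P^(n)(x), the largest index s ∈ {0, …, ⌊n/2⌋} such that θ_s ≥ t_n is s = ⌊n/2⌋ − 2. -/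
/-- The threshold `t_n = (q²(q^{n−2} − 1)(q^{n−3} − 1) − q^{2⌊n/2⌋−2} + 1)/(q^{2⌊n/2⌋−2} − 1)`. -/
def taltN (q n : ℕ) : ℚ :=
  ((q : ℚ) ^ 2 * ((q : ℚ) ^ (n - 2) - 1) * ((q : ℚ) ^ (n - 3) - 1) -
      (q : ℚ) ^ (2 * (n / 2) - 2) + 1) / ((q : ℚ) ^ (2 * (n / 2) - 2) - 1)

lemma Palt_anti (q n : ℕ) (hq : 2 ≤ q) {x y : ℕ} (hxy : y ≤ x) :
    Palt q n x ≤ Palt q n y := by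
  have hQ : (2:ℚ) ≤ (q:ℚ) := by exact_mod_cast hq
  have hden : (0:ℚ) < (q:ℚ)^2 - 1 := by nlinarith
  have hpow : (q:ℚ)^(2*n - 2*x - 1) ≤ (q:ℚ)^(2*n - 2*y - 1) := by
    apply pow_le_pow_right₀ (by linarith) (by omega)
  unfold Palt
  exact (div_le_div_iff_of_pos_right hden).mpr (by linarith)

lemma aux_even (q m : ℕ) (hq : 2 ≤ q) (hm : 3 ≤ m) :
    taltN q (2*m) ≤ Palt q (2*m) (m-2) ∧ Palt q (2*m) (m-1) < taltN q (2*m) := by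
  have hQ : (2:ℚ) ≤ (q:ℚ) := by exact_mod_cast hq
  set Q : ℚ := (q:ℚ) with hQdef
  set u : ℚ := Q^(2*m-3) with hudef
  have hu : Q^3 ≤ u := by
    apply pow_le_pow_right₀ (by linarith) (by omega)
  have hQ4 : (4:ℚ) ≤ Q^2 := by nlinarith
  have hQ8 : (8:ℚ) ≤ Q^3 := by nlinarith
  have hu1 : (1:ℚ) ≤ u := by nlinarith
  have e1 : Q^(2*(2*m) - 2*(m-2) - 1) = u * Q^6 := by rw [hudef, ← pow_add]; congr 1; omega
  have e2 : Q^(2*m) = u * Q^3 := by rw [hudef, ← pow_add]; congr 1; omega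
  have e3 : Q^(2*m - 1) = u * Q^2 := by rw [hudef, ← pow_add]; congr 1; omega
  have e4 : Q^(2*m - 2) = u * Q := by rw [hudef, ← pow_succ]; congr 1; omega
  have e5 : Q^(2*(2*m/2) - 2) = u * Q := by rw [hudef, ← pow_succ]; congr 1; omega
  have e6 : Q^(2*(2*m) - 2*(m-1) - 1) = u * Q^4 := by rw [hudef, ← pow_add]; congr 1; omega
  have hQ2 : (0:ℚ) < Q^2 - 1 := by nlinarith
  have huQ : (0:ℚ) < u * Q - 1 := by nlinarith
  have ht : taltN q (2*m) = u * Q^2 - Q^2 - 1 := by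
    unfold taltN
    rw [e4, e5]
    rw [hudef]
    rw [div_eq_iff (by rw [← hudef]; exact ne_of_gt huQ)]
    ring
  constructor
  · unfold Palt
    rw [e1, e2, e3, ht, le_div_iff₀ hQ2]
    nlinarith [mul_nonneg (mul_nonneg (by positivity : (0:ℚ) ≤ u) (by positivity : (0:ℚ) ≤ Q^3)) (by nlinarith : (0:ℚ) ≤ Q^3 - Q - 1)]
  · unfold Palt
    rw [e6, e2, e3, ht, div_lt_iff₀ hQ2]
    nlinarith [mul_le_mul_of_nonneg_right hu (by positivity : (0:ℚ) ≤ Q^3)]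

lemma aux_odd (q m : ℕ) (hq : 2 ≤ q) (hm : 3 ≤ m) :
    taltN q (2*m+1) ≤ Palt q (2*m+1) (m-2) ∧ Palt q (2*m+1) (m-1) < taltN q (2*m+1) := by
  have hQ : (2:ℚ) ≤ (q:ℚ) := by exact_mod_cast hq
  set Q : ℚ := (q:ℚ) with hQdef
  set u : ℚ := Q^(2*m-2) with hudef
  have hu : Q^4 ≤ u := by
    apply pow_le_pow_right₀ (by linarith) (by omega)
  have hQ4 : (4:ℚ) ≤ Q^2 := by nlinarith
  have hQ8 : (8:ℚ) ≤ Q^3 := by nlinarith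
  have hu1 : (1:ℚ) < u := by nlinarith
  have e1 : Q^(2*(2*m+1) - 2*(m-2) - 1) = u * Q^7 := by rw [hudef, ← pow_add]; congr 1; omega
  have e2 : Q^(2*m+1) = u * Q^3 := by rw [hudef, ← pow_add]; congr 1; omega
  have e3 : Q^(2*m+1 - 1) = u * Q^2 := by rw [hudef, ← pow_add]; congr 1; omega
  have e4 : Q^(2*m+1 - 2) = u * Q := by rw [hudef, ← pow_succ]; congr 1; omega
  have e5 : Q^(2*m+1 - 3) = u := by rw [hudef]; congr 1 <;> omega
  have e6 : Q^(2*((2*m+1)/2) - 2) = u := by rw [hudef]; congr 1 <;> omega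
  have e7 : Q^(2*(2*m+1) - 2*(m-1) - 1) = u * Q^5 := by rw [hudef, ← pow_add]; congr 1; omega
  have hQ2 : (0:ℚ) < Q^2 - 1 := by nlinarith
  have hu0 : (0:ℚ) < u - 1 := by linarith
  have ht : taltN q (2*m+1) = u * Q^3 - Q^2 - 1 := by
    unfold taltN
    rw [e4, e5, e6]
    field_simp
    ring
  constructor
  · unfold Palt
    rw [e1, e2, e3, ht, le_div_iff₀ hQ2]
    nlinarith [mul_nonneg (mul_nonneg (by positivity : (0:ℚ) ≤ u) (by positivity : (0:ℚ) ≤ Q^2)) (by nlinarith : (0:ℚ) ≤ Q^5 - Q^3 - 1)]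
  · unfold Palt
    rw [e7, e2, e3, ht, div_lt_iff₀ hQ2]
    nlinarith [mul_le_mul_of_nonneg_right hu (by positivity : (0:ℚ) ≤ Q^2)]

/-- For `n ≥ 6` and `q ≥ 2`: `P^(n)(⌊n/2⌋ − 2) ≥ t_n > P^(n)(⌊n/2⌋ − 1)`; consequently
`⌊n/2⌋ − 2` is the largest index `s ∈ {0, …, ⌊n/2⌋}` with eigenvalue `θ_s = P^(n)(s) ≥ t_n`. -/
theorem largest_index_ge_threshold (n q : ℕ) (hn : 6 ≤ n) (hq : 2 ≤ q) :
    (taltN q n ≤ Palt q n (n / 2 - 2)) ∧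
    (Palt q n (n / 2 - 1) < taltN q n) ∧
    IsGreatest {s : ℕ | s ≤ n / 2 ∧ taltN q n ≤ Palt q n s} (n / 2 - 2) := by
  obtain ⟨m, hm3, hcase⟩ : ∃ m, 3 ≤ m ∧ (n = 2*m ∨ n = 2*m+1) :=
    ⟨n/2, by omega, by omega⟩
  have hdiv : n / 2 = m := by omega
  have hAB : taltN q n ≤ Palt q n (m-2) ∧ Palt q n (m-1) < taltN q n := by
    rcases hcase with h | h <;> subst h
    · exact aux_even q m hq hm3
    · exact aux_odd q m hq hm3
  obtain ⟨hA, hB⟩ := hAB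
  rw [hdiv]
  refine ⟨hA, hB, ⟨⟨by omega, hA⟩, ?_⟩⟩
  intro s hs
  obtain ⟨hs1, hs2⟩ := hs
  by_contra hlt
  push_neg at hlt
  have : Palt q n s ≤ Palt q n (m-1) := Palt_anti q n hq (by omega)
  linarith
end

section
/- Let n ≥ 8 be an even integer and q ≥ 2 an integer. Set θ₀ = (q^n − 1)(q^{n−1} − 1)/(q^2 − 1), θ_s = (q^{n+3} − q^n − q^{n−1} + 1)/(q^2 − 1), θ_{s+1} = (q^{n+1} − q^n − q^{n−1} + 1)/(q^2 − 1), θ_r = (1 − q^n)/(q^2 − 1), and Δ = (q^n − 1)(q^{n−1} − 1)(q^{n+2} + q^{n+1} − q^n − q^{n−1} − q^4 − q^2 + 2)/(q^2 − 1)^2, all as rational numbers. Then q^{n(n−1)/2} · (Δ − θ₀(θ_s + θ_{s+1} + θ_r) − θ_s·θ_{s+1}·θ_r) / ((θ₀ − θ_s)(θ₀ − θ_{s+1})(θ₀ − θ_r)) = q^{(n−1)(n/2 − 3)}. -/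
/-- For even `n ≥ 8` and `q ≥ 2`, the Ratio-type eigenvalue bound for `α₃` of
`Γ(Alt_n(F_q))`, namely
`q^{n(n−1)/2}·(Δ − θ₀(θ_s + θ_{s+1} + θ_r) − θ_s θ_{s+1} θ_r)/((θ₀ − θ_s)(θ₀ − θ_{s+1})(θ₀ − θ_r))`,
equals the Singleton-like bound `q^{(n−1)(n/2 − 3)}` for minimum rank distance `8`. -/
theorem ratioBound_eq_singleton_d8 (n q : ℕ) (hn : 8 ≤ n) (hne : Even n) (hq : 2 ≤ q) :
    let θ₀ : ℚ := ((q : ℚ) ^ n - 1) * ((q : ℚ) ^ (n - 1) - 1) / ((q : ℚ) ^ 2 - 1)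
    let θs : ℚ := ((q : ℚ) ^ (n + 3) - (q : ℚ) ^ n - (q : ℚ) ^ (n - 1) + 1) / ((q : ℚ) ^ 2 - 1)
    let θs1 : ℚ := ((q : ℚ) ^ (n + 1) - (q : ℚ) ^ n - (q : ℚ) ^ (n - 1) + 1) / ((q : ℚ) ^ 2 - 1)
    let θr : ℚ := (1 - (q : ℚ) ^ n) / ((q : ℚ) ^ 2 - 1)
    let Δ : ℚ := ((q : ℚ) ^ n - 1) * ((q : ℚ) ^ (n - 1) - 1) *
      ((q : ℚ) ^ (n + 2) + (q : ℚ) ^ (n + 1) - (q : ℚ) ^ n - (q : ℚ) ^ (n - 1) -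
        (q : ℚ) ^ 4 - (q : ℚ) ^ 2 + 2) / ((q : ℚ) ^ 2 - 1) ^ 2
    (q : ℚ) ^ (n * (n - 1) / 2) *
        (Δ - θ₀ * (θs + θs1 + θr) - θs * θs1 * θr) /
        ((θ₀ - θs) * (θ₀ - θs1) * (θ₀ - θr)) =
      (q : ℚ) ^ ((n - 1) * (n / 2 - 3)) := by
  intro θ₀ θs θs1 θr Δ
  simp only [θ₀, θs, θs1, θr, Δ]
  obtain ⟨m, hm⟩ := hne
  have hm4 : 4 ≤ m := by omega
  set Q : ℚ := (q : ℚ) with hQdef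
  have hQ1 : (1 : ℚ) < Q := Nat.one_lt_cast.mpr (by omega)
  have hQ0 : (0 : ℚ) < Q := by linarith
  -- exponent arithmetic
  have hexp : n * (n - 1) / 2 = (n - 1) * (n / 2 - 3) + (n - 1) * 3 := by
    have h1 : n * (n - 1) / 2 = m * (n - 1) := by
      rw [hm, show (m + m) * (m + m - 1) = 2 * (m * (m + m - 1)) by ring,
        Nat.mul_div_cancel_left _ two_pos]
    have h2 : n / 2 = m := by omega
    have h3 : n / 2 - 3 + 3 = m := by omega
    rw [h1, ← Nat.mul_add, h3, Nat.mul_comm]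
  have hsplit : Q ^ (n * (n - 1) / 2) = Q ^ ((n - 1) * (n / 2 - 3)) * (Q ^ (n - 1)) ^ 3 := by
    rw [← pow_mul, ← pow_add, hexp]
  -- rewrite all powers in terms of a := Q^(n-1)
  have e1 : Q ^ n = Q ^ (n - 1) * Q := by
    rw [← pow_succ]; congr 1; omega
  have e2 : Q ^ (n + 1) = Q ^ (n - 1) * Q ^ 2 := by
    rw [← pow_add]; congr 1; omega
  have e3 : Q ^ (n + 2) = Q ^ (n - 1) * Q ^ 3 := by
    rw [← pow_add]; congr 1; omega
  have e4 : Q ^ (n + 3) = Q ^ (n - 1) * Q ^ 4 := by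
    rw [← pow_add]; congr 1; omega
  rw [hsplit, e1, e2, e3, e4]
  set a : ℚ := Q ^ (n - 1) with hadef
  set E : ℚ := Q ^ ((n - 1) * (n / 2 - 3)) with hEdef
  have hE0 : (0 : ℚ) < E := pow_pos hQ0 _
  have ha1 : (1 : ℚ) < a := one_lt_pow₀ hQ1 (by omega)
  have haQ : Q < a := by
    calc Q = Q ^ 1 := (pow_one Q).symm
    _ < Q ^ (n - 1) := by exact pow_lt_pow_right₀ hQ1 (by omega)
  have haQ3 : Q ^ 3 < a := by
    calc Q ^ 3 < Q ^ (n - 1) := by exact pow_lt_pow_right₀ hQ1 (by omega)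
    _ = a := rfl
  have hd : (0 : ℚ) < Q ^ 2 - 1 := by nlinarith
  have hd0 : (Q ^ 2 - 1) ≠ 0 := ne_of_gt hd
  have hDeq : ((a * Q - 1) * (a - 1) / (Q ^ 2 - 1) -
        (a * Q ^ 4 - a * Q - a + 1) / (Q ^ 2 - 1)) *
      ((a * Q - 1) * (a - 1) / (Q ^ 2 - 1) -
        (a * Q ^ 2 - a * Q - a + 1) / (Q ^ 2 - 1)) *
      ((a * Q - 1) * (a - 1) / (Q ^ 2 - 1) - (1 - a * Q) / (Q ^ 2 - 1)) =
      (Q * a * (a - Q ^ 3)) * (Q * a * (a - Q)) * ((Q * a - 1) * a) / (Q ^ 2 - 1) ^ 3 := by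
    field_simp
    ring
  have hDpos : (0 : ℚ) <
      (Q * a * (a - Q ^ 3)) * (Q * a * (a - Q)) * ((Q * a - 1) * a) / (Q ^ 2 - 1) ^ 3 := by
    have h1 : (0 : ℚ) < Q * a * (a - Q ^ 3) := by
      have : (0 : ℚ) < a - Q ^ 3 := by linarith
      positivity
    have h2 : (0 : ℚ) < Q * a * (a - Q) := by
      have : (0 : ℚ) < a - Q := by linarith
      positivity
    have h3 : (0 : ℚ) < (Q * a - 1) * a := by
      have : (1 : ℚ) < Q * a := by nlinarith
      nlinarith
    have h4 : (0 : ℚ) < (Q ^ 2 - 1) ^ 3 := by positivity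
    positivity
  rw [hDeq, div_eq_iff (ne_of_gt hDpos)]
  field_simp
  ring
end

section
/- Let C and A be F_q-linear subspaces of Alt_n(F_q) such that every nonzero matrix in C has rank at least d, and every two matrices M, N ∈ A satisfy rank(M − N) ≤ d − 1. Then |C| · |A| ≤ q^{n(n−1)/2}. -/
open Matrix

lemma alt_card_pairs (n : ℕ) :
    Fintype.card {p : Fin n × Fin n // p.1 < p.2} = n * (n - 1) / 2 := by
  have e : {p : Fin n × Fin n // p.1 < p.2} ≃ Σ j : Fin n, Fin j := by
    refine ⟨fun p => ⟨p.1.2, ⟨p.1.1, p.2⟩⟩,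
      fun s => ⟨(⟨s.2.1, s.2.2.trans s.1.isLt⟩, s.1), s.2.2⟩, ?_, ?_⟩
    · rintro ⟨⟨i, j⟩, h⟩; rfl
    · rintro ⟨j, i⟩; rfl
  rw [Fintype.card_congr e, Fintype.card_sigma]
  simp only [Fintype.card_fin]
  rw [Fin.sum_univ_eq_sum_range (fun i => i) n, Finset.sum_range_id]

lemma matrix_rank_eq_zero {F : Type*} [Field F] {n : ℕ}
    {M : Matrix (Fin n) (Fin n) F} (h : M.rank = 0) : M = 0 := by
  rw [Matrix.rank, Submodule.finrank_eq_zero, LinearMap.range_eq_bot] at h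
  ext i j
  have := congrFun (LinearMap.congr_fun h (Pi.single j 1)) i
  simpa [Matrix.mulVecLin_apply, Matrix.mulVec_single] using this

/-- Code–anticode bound for alternating matrices: if `C` and `A` are `F_q`-linear subspaces
of `Alt_n(F_q)` such that every nonzero matrix of `C` has rank at least `d` and every two
matrices of `A` are at rank distance at most `d − 1`, then `|C|·|A| ≤ q^{n(n−1)/2}`. -/
theorem code_anticode_bound
    {F : Type*} [Field F] [Fintype F] {n d : ℕ}
    (C A : Submodule F (Matrix (Fin n) (Fin n) F))
    (hCalt : ∀ M ∈ C, Mᵀ = -M ∧ ∀ i, M i i = 0)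
    (hAalt : ∀ M ∈ A, Mᵀ = -M ∧ ∀ i, M i i = 0)
    (hCd : ∀ M ∈ C, M ≠ 0 → d ≤ M.rank)
    (hAd : ∀ M ∈ A, ∀ N ∈ A, (M - N).rank ≤ d - 1) :
    Nat.card C * Nat.card A ≤ Fintype.card F ^ (n * (n - 1) / 2) := by
  classical
  -- the injection into upper-triangular coordinates
  let f : C × A → ({p : Fin n × Fin n // p.1 < p.2} → F) :=
    fun x p => (x.1.1 + x.2.1) p.1.1 p.1.2
  have hf : Function.Injective f := by
    rintro ⟨⟨M, hM⟩, ⟨N, hN⟩⟩ ⟨⟨M', hM'⟩, ⟨N', hN'⟩⟩ h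
    -- the sum matrix difference is alternating and vanishes above the diagonal
    set D := (M + N) - (M' + N') with hD
    have hDalt : Dᵀ = -D ∧ ∀ i, D i i = 0 := by
      obtain ⟨h1, h2⟩ := hCalt M hM
      obtain ⟨h3, h4⟩ := hAalt N hN
      obtain ⟨h5, h6⟩ := hCalt M' hM'
      obtain ⟨h7, h8⟩ := hAalt N' hN'
      constructor
      · simp [hD, Matrix.transpose_sub, Matrix.transpose_add, h1, h3, h5, h7]
        abel
      · intro i
        simp [hD, h2 i, h4 i, h6 i, h8 i]
    have hDzero : D = 0 := by
      ext i j
      rcases lt_trichotomy i j with hij | hij | hij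
      · have := congrFun h ⟨(i, j), hij⟩
        simpa [f, hD, sub_eq_zero] using this
      · subst hij; simpa using hDalt.2 i
      · have hji := congrFun h ⟨(j, i), hij⟩
        have hskew : D i j = -D j i := by
          have := congrFun (congrFun hDalt.1 j) i
          simpa [Matrix.transpose_apply] using this
        have hz : D j i = 0 := by simpa [f, hD, sub_eq_zero] using hji
        rw [hz, neg_zero] at hskew
        simpa [Matrix.zero_apply] using hskew
    -- hence M - M' = N' - N lies in C ∩ A
    have hP : M - M' = N' - N := by
      have := sub_eq_zero.mp hDzero
      have h' : M + N = M' + N' := by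
        have := hDzero
        rw [hD, sub_eq_zero] at this
        exact this
      have : M - M' + (N - N') = 0 := by
        rw [sub_add_sub_comm]; rw [sub_eq_zero]; exact h'
      linear_combination (norm := abel_nf) this
    have hPC : M - M' ∈ C := sub_mem hM hM'
    have hPA : N' - N ∈ A := sub_mem hN' hN
    have hPzero : M - M' = 0 := by
      by_contra hne
      have h1 : d ≤ (M - M').rank := hCd _ hPC hne
      have h2 : (N' - N).rank ≤ d - 1 := hAd N' hN' N hN
      rw [← hP] at h2
      rcases Nat.eq_zero_or_pos d with hd | hd
      · subst hd
        simp at h2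
        exact hne (matrix_rank_eq_zero h2)
      · omega
    have hM_eq : M = M' := by rwa [sub_eq_zero] at hPzero
    have hN_eq : N = N' := by
      have := hP; rw [hPzero] at this
      have : N' - N = 0 := this.symm
      rw [sub_eq_zero] at this; exact this.symm
    simp [Prod.ext_iff, Subtype.ext_iff, hM_eq, hN_eq]
  have hcard : Fintype.card (C × A) ≤
      Fintype.card ({p : Fin n × Fin n // p.1 < p.2} → F) :=
    Fintype.card_le_of_injective f hf
  rw [Fintype.card_prod, Fintype.card_fun, alt_card_pairs] at hcard
  simpa [Nat.card_eq_fintype_card] using hcard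
end

section
/- Let C ⊆ Alt_n(F_q) be an F_q-linear subspace of dimension k such that every nonzero matrix in C has rank at least 2d, where d ≥ 1 and 2d − 1 ≤ n. Then k ≤ (n(n−1) − 2(d−1)(2d−1))/2. -/
open Matrix

/-- Dimension bound for linear alternating codes: if `C ⊆ Alt_n(F_q)` is a `k`-dimensional
`F_q`-linear code all of whose nonzero matrices have rank at least `2d`, with `d ≥ 1` and
`2d − 1 ≤ n`, then `k ≤ (n(n−1) − 2(d−1)(2d−1))/2`. -/
theorem linear_code_dim_bound
    {F : Type*} [Field F] [Fintype F] {n d k : ℕ}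
    (hd : 1 ≤ d) (hdn : 2 * d - 1 ≤ n)
    (C : Submodule F (Matrix (Fin n) (Fin n) F))
    (hCalt : ∀ M ∈ C, Mᵀ = -M ∧ ∀ i, M i i = 0)
    (hCd : ∀ M ∈ C, M ≠ 0 → 2 * d ≤ M.rank)
    (hk : Module.finrank F C = k) :
    k ≤ (n * (n - 1) - 2 * (d - 1) * (2 * d - 1)) / 2 := by
  classical
  set m := 2 * d - 1 with hm
  -- The index type of "free" coordinates
  let S := {p : Fin n × Fin n // p.1 < p.2 ∧ m ≤ (p.2 : ℕ)}
  -- The projection map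
  let φ : C →ₗ[F] (S → F) :=
    { toFun := fun M p => (M : Matrix (Fin n) (Fin n) F) p.1.1 p.1.2
      map_add' := fun M N => rfl
      map_smul' := fun c M => rfl }
  have hinj : Function.Injective φ := by
    rw [injective_iff_map_eq_zero]
    intro M hM
    by_contra hM0
    have hMne : (M : Matrix (Fin n) (Fin n) F) ≠ 0 := fun h => hM0 (Subtype.ext h)
    obtain ⟨hskew, hdiag⟩ := hCalt (M : Matrix (Fin n) (Fin n) F) M.2
    -- all entries with column index ≥ m vanish
    have hcol : ∀ i j : Fin n, m ≤ (j : ℕ) → (M : Matrix (Fin n) (Fin n) F) i j = 0 := by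
      intro i j hj
      rcases lt_trichotomy i j with h | h | h
      · exact congrFun hM ⟨(i, j), h, hj⟩
      · subst h; exact hdiag i
      · have hji : (M : Matrix (Fin n) (Fin n) F) j i = 0 := by
          have hij : m ≤ (i : ℕ) := le_trans hj (le_of_lt h)
          exact congrFun hM ⟨(j, i), h, hij⟩
        have h2 := congrFun (congrFun hskew j) i
        simp only [Matrix.transpose_apply, Matrix.neg_apply] at h2
        rw [h2, hji, neg_zero]
    -- M = M * diagonal of the indicator of {j | j < m}
    set w : Fin n → F := fun j => if (j : ℕ) < m then 1 else 0 with hw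
    have hMeq : (M : Matrix (Fin n) (Fin n) F) =
        (M : Matrix (Fin n) (Fin n) F) * Matrix.diagonal w := by
      ext i j
      rw [Matrix.mul_apply_eq_vecMul]
      by_cases hj : (j : ℕ) < m
      · simp [Matrix.vecMul_diagonal, hw, hj]
      · simp [Matrix.vecMul_diagonal, hw, hj, hcol i j (le_of_not_gt hj)]
    -- so rank M ≤ m
    have hr : (M : Matrix (Fin n) (Fin n) F).rank ≤ m := by
      calc (M : Matrix (Fin n) (Fin n) F).rank
          = ((M : Matrix (Fin n) (Fin n) F) * Matrix.diagonal w).rank := by rw [← hMeq]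
        _ ≤ (Matrix.diagonal w).rank := Matrix.rank_mul_le_right _ _
        _ = Fintype.card {j : Fin n // w j ≠ 0} := Matrix.rank_diagonal w
        _ = Fintype.card {j : Fin n // (j : ℕ) < m} := by
            apply Fintype.card_congr
            apply Equiv.subtypeEquivRight
            intro j
            by_cases hj : (j : ℕ) < m <;> simp [hw, hj]
        _ = m := by
            have e : {j : Fin n // (j : ℕ) < m} ≃ Fin m :=
              { toFun := fun j => ⟨(j : Fin n), j.2⟩
                invFun := fun i => ⟨⟨(i : ℕ), lt_of_lt_of_le i.2 hdn⟩, i.2⟩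
                left_inv := fun j => by ext; rfl
                right_inv := fun i => by ext; rfl }
            rw [Fintype.card_congr e, Fintype.card_fin]
    have := hCd (M : Matrix (Fin n) (Fin n) F) M.2 hMne
    omega
  -- dimension bound via the injective map
  haveI : Module.Finite F (S → F) := Module.Finite.pi
  have hdim : k ≤ Fintype.card S := by
    rw [← hk, ← Module.finrank_fintype_fun_eq_card F]
    exact LinearMap.finrank_le_finrank_of_injective hinj
  -- count the index set
  have hcard : Fintype.card S = ∑ j ∈ Finset.range n, (if m ≤ j then j else 0) := by
    rw [Fintype.card_subtype]
    rw [Finset.card_filter]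
    rw [Fintype.sum_prod_type_right]
    have : ∀ j : Fin n,
        (∑ i : Fin n, if (i, j).1 < (i, j).2 ∧ m ≤ ((i, j).2 : ℕ) then 1 else 0)
          = if m ≤ (j : ℕ) then (j : ℕ) else 0 := by
      intro j
      by_cases hj : m ≤ (j : ℕ)
      · simp only [hj, and_true, if_pos]
        have : (∑ i : Fin n, if i < j then 1 else 0)
            = ∑ i ∈ Finset.range n, (if i < (j : ℕ) then 1 else 0) := by
          simp only [Fin.lt_def]
          exact Fin.sum_univ_eq_sum_range (fun i => if i < (j : ℕ) then 1 else 0) n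
        rw [show (∑ i : Fin n, if (i, j).1 < (i, j).2 then 1 else 0)
            = ∑ i : Fin n, if i < j then 1 else 0 from rfl, this,
          ← Finset.sum_filter]
        have hfr : (Finset.range n).filter (· < (j : ℕ)) = Finset.range (j : ℕ) := by
          ext a
          simp only [Finset.mem_filter, Finset.mem_range]
          exact ⟨fun h => h.2, fun h => ⟨lt_trans h j.2, h⟩⟩
        rw [hfr]
        simp
      · simp [hj]
    rw [Fintype.sum_congr _ _ this, Fin.sum_univ_eq_sum_range (fun j => if m ≤ j then j else 0)]
  -- evaluate the sum
  have hsplit : (∑ j ∈ Finset.range n, (if m ≤ j then j else 0)) + (∑ j ∈ Finset.range m, j)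
      = ∑ j ∈ Finset.range n, j := by
    have h1 : (∑ j ∈ Finset.range n, (if j < m then j else 0)) = ∑ j ∈ Finset.range m, j := by
      rw [← Finset.sum_filter]
      congr 1
      ext a
      simp only [Finset.mem_filter, Finset.mem_range]
      omega
    rw [← h1, ← Finset.sum_add_distrib]
    apply Finset.sum_congr rfl
    intro x _
    by_cases hx : m ≤ x <;> simp [hx, Nat.lt_of_not_le, not_le]
  have hA := Finset.sum_range_id_mul_two n
  have hB := Finset.sum_range_id_mul_two m
  have hkey : 2 * (d - 1) * m = m * (m - 1) := by
    obtain ⟨e, rfl⟩ : ∃ e, d = e + 1 := ⟨d - 1, by omega⟩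
    have h1 : m = 2 * e + 1 := by omega
    have h3 : (e + 1) - 1 = e := by omega
    have h4 : 2 * e + 1 - 1 = 2 * e := by omega
    rw [h1, h3, h4]
    ring
  omega
end

section
/- Let d ≥ 2 be an even integer and let C ⊆ Alt_n(F_q) be an alternating code with minimum rank distance exactly 2d (i.e., any two distinct codewords are at rank distance at least 2d, and some pair of distinct codewords is at rank distance exactly 2d). Then the balls of radius d − 1 centered at the codewords of C do not cover Alt_n(F_q); that is, there exists B ∈ Alt_n(F_q) with rank(B − X) > d − 1 for every X ∈ C. In particular, C is not a perfect code. -/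
open Matrix


/-- The pairing involution on `Fin d` (for even `d`) swapping `2k ↔ 2k+1`. -/
def pairFun {d : ℕ} (hd : Even d) (i : Fin d) : Fin d :=
  if h : Even i.val then
    ⟨i.val + 1, by obtain ⟨k, hk⟩ := hd; obtain ⟨m, hm⟩ := h; have := i.isLt; omega⟩
  else
    ⟨i.val - 1, by have := i.isLt; omega⟩

lemma pairFun_val_even {d : ℕ} (hd : Even d) (i : Fin d) (h : Even i.val) :
    (pairFun hd i).val = i.val + 1 := by simp [pairFun, h]

lemma pairFun_val_odd {d : ℕ} (hd : Even d) (i : Fin d) (h : ¬ Even i.val) :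
    (pairFun hd i).val = i.val - 1 := by simp [pairFun, h]

lemma pairFun_parity {d : ℕ} (hd : Even d) (i : Fin d) :
    Even (pairFun hd i).val ↔ ¬ Even i.val := by
  by_cases h : Even i.val
  · rw [pairFun_val_even hd i h]
    simp [Nat.even_add_one, h]
  · rw [pairFun_val_odd hd i h]
    have h1 : 1 ≤ i.val := Nat.one_le_iff_ne_zero.mpr (fun h0 => h (by simp [h0]))
    constructor
    · intro _; exact h
    · intro _
      rcases Nat.even_or_odd (i.val - 1) with h' | h'
      · exact h'
      · exfalso; apply h; rcases h' with ⟨m, hm⟩; exact ⟨m+1, by omega⟩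

lemma pairFun_involutive {d : ℕ} (hd : Even d) : Function.Involutive (pairFun hd) := by
  intro i
  by_cases h : Even i.val
  · have h1 : ¬ Even (pairFun hd i).val := by rw [pairFun_parity]; simpa using h
    apply Fin.ext
    rw [pairFun_val_odd hd _ h1, pairFun_val_even hd i h]
    omega
  · have h1 : Even (pairFun hd i).val := by rw [pairFun_parity]; exact h
    have h2 : 1 ≤ i.val := Nat.one_le_iff_ne_zero.mpr (fun h0 => h (by simp [h0]))
    apply Fin.ext
    rw [pairFun_val_even hd _ h1, pairFun_val_odd hd i h]
    omega

lemma pairFun_ne {d : ℕ} (hd : Even d) (i : Fin d) : pairFun hd i ≠ i := by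
  intro h
  have := pairFun_parity hd i
  rw [h] at this
  tauto

/-- Block-diagonal skew matrix with `d/2` copies of `[[0,1],[-1,0]]`. -/
def Jmat (F : Type*) [Field F] {d : ℕ} (hd : Even d) : Matrix (Fin d) (Fin d) F :=
  Matrix.of fun i j => if j = pairFun hd i then (if Even i.val then (1:F) else -1) else 0

lemma Jmat_mul_transpose (F : Type*) [Field F] {d : ℕ} (hd : Even d) :
    Jmat F hd * (Jmat F hd)ᵀ = 1 := by
  ext i j
  simp only [Matrix.mul_apply, Matrix.transpose_apply, Jmat, Matrix.of_apply]
  rw [Finset.sum_eq_single (pairFun hd i)]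
  · by_cases hij : i = j
    · subst hij
      by_cases h : Even i.val <;> simp [h, Matrix.one_apply]
    · have hpp : pairFun hd i ≠ pairFun hd j :=
        fun h => hij ((pairFun_involutive hd).injective h)
      simp [hpp, Matrix.one_apply, hij]
  · intro k _ hk
    simp [hk]
  · intro h; exact absurd (Finset.mem_univ _) h

lemma Jmat_transpose (F : Type*) [Field F] {d : ℕ} (hd : Even d) :
    (Jmat F hd)ᵀ = - Jmat F hd := by
  ext i j
  simp only [Matrix.transpose_apply, Jmat, Matrix.of_apply, Matrix.neg_apply]
  by_cases h : j = pairFun hd i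
  · have hi : i = pairFun hd j := by rw [h, pairFun_involutive hd]
    have hpar := (pairFun_parity hd i)
    rw [← h] at hpar
    rw [if_pos hi, if_pos h]
    by_cases he : Even i.val
    · rw [if_neg (fun hj => (hpar.mp hj) he), if_pos he]
    · rw [if_pos (hpar.mpr he), if_neg he, neg_neg]
  · have hi : i ≠ pairFun hd j := by
      intro hc; apply h; rw [hc, pairFun_involutive hd]
    rw [if_neg hi, if_neg h, neg_zero]

lemma Jmat_diag (F : Type*) [Field F] {d : ℕ} (hd : Even d) (i : Fin d) :
    Jmat F hd i i = 0 := by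
  simp [Jmat, (pairFun_ne hd i).symm]

lemma Jmat_rank (F : Type*) [Field F] {d : ℕ} (hd : Even d) :
    (Jmat F hd).rank = d := by
  have : IsUnit (Jmat F hd) := by
    apply IsUnit.of_mul_eq_one (Jmat F hd)ᵀ
    exact Jmat_mul_transpose F hd
  rw [Matrix.rank_of_isUnit _ this, Fintype.card_fin]

def Umat (F : Type*) [Field F] (d k : ℕ) : Matrix (Fin d ⊕ Fin k) (Fin d) F :=
  Matrix.of fun i a => if i = Sum.inl a then 1 else 0

lemma Umat_t_mul (F : Type*) [Field F] (d k : ℕ) :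
    (Umat F d k)ᵀ * Umat F d k = 1 := by
  ext a b
  simp only [Matrix.mul_apply, Matrix.transpose_apply, Umat, Matrix.of_apply]
  rw [Finset.sum_eq_single (Sum.inl a : Fin d ⊕ Fin k)]
  · simp [Matrix.one_apply, eq_comm]
  · intro k _ hk; simp [hk]
  · intro h; exact absurd (Finset.mem_univ _) h

lemma Umat_sandwich (F : Type*) [Field F] {d : ℕ} (k : ℕ) (M : Matrix (Fin d) (Fin d) F) :
    Umat F d k * M * (Umat F d k)ᵀ = Matrix.fromBlocks M 0 0 0 := by
  ext i j
  simp only [Matrix.mul_apply, Matrix.transpose_apply, Umat, Matrix.of_apply]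
  rcases i with a | a <;> rcases j with b | b <;>
    simp [Matrix.fromBlocks, Finset.sum_ite_eq, Finset.sum_ite_eq', ite_mul, mul_ite,
      Finset.mul_sum, Fintype.sum_sum_type]

lemma rank_fromBlocks_zero (F : Type*) [Field F] {d : ℕ} (k : ℕ)
    (M : Matrix (Fin d) (Fin d) F) :
    (Matrix.fromBlocks M 0 0 0 : Matrix (Fin d ⊕ Fin k) (Fin d ⊕ Fin k) F).rank = M.rank := by
  rw [← Umat_sandwich F k M]
  apply le_antisymm
  · exact le_trans (Matrix.rank_mul_le_left _ _) (Matrix.rank_mul_le_right _ _)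
  · have hM : M = (Umat F d k)ᵀ * (Umat F d k * M * (Umat F d k)ᵀ) * Umat F d k := by
      simp only [← Matrix.mul_assoc]
      rw [Umat_t_mul, Matrix.one_mul, Matrix.mul_assoc, Umat_t_mul, Matrix.mul_one]
    conv_lhs => rw [hM]
    exact le_trans (Matrix.rank_mul_le_left _ _) (Matrix.rank_mul_le_right _ _)

lemma matrix_rank_add_le {F : Type*} [Field F] {m n : Type*} [Fintype m] [Fintype n]
    (A B : Matrix m n F) : (A + B).rank ≤ A.rank + B.rank := by
  have h := LinearMap.rank_add_le A.mulVecLin B.mulVecLin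
  rw [← Matrix.mulVecLin_add] at h
  have hfin : LinearMap.rank A.mulVecLin + LinearMap.rank B.mulVecLin < Cardinal.aleph0 :=
    Cardinal.add_lt_aleph0 (Module.rank_lt_aleph0 _ _) (Module.rank_lt_aleph0 _ _)
  have h2 := Cardinal.toNat_le_toNat h hfin
  rwa [Cardinal.toNat_add (Module.rank_lt_aleph0 _ _) (Module.rank_lt_aleph0 _ _)] at h2



/-- No perfect alternating codes for even `d`: if `d ≥ 2` is even and `C ⊆ Alt_n(F_q)` is an
alternating code of minimum rank distance exactly `2d` (all distinct codewords at rank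
distance at least `2d`, and some pair exactly at distance `2d`), then the balls of radius
`d − 1` around the codewords do not cover `Alt_n(F_q)`: there is an alternating matrix `B`
with `rank (B − X) > d − 1` for every codeword `X`. -/
theorem no_perfect_code_even_d
    {F : Type*} [Field F] [Fintype F] {n d : ℕ}
    (hd2 : 2 ≤ d) (hdeven : Even d)
    (C : Set (Matrix (Fin n) (Fin n) F))
    (hCalt : ∀ X ∈ C, Xᵀ = -X ∧ ∀ i, X i i = 0)
    (hmin : ∀ X ∈ C, ∀ Y ∈ C, X ≠ Y → 2 * d ≤ (X - Y).rank)
    (hex : ∃ X ∈ C, ∃ Y ∈ C, X ≠ Y ∧ (X - Y).rank = 2 * d) :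
    ∃ B : Matrix (Fin n) (Fin n) F,
      (Bᵀ = -B ∧ ∀ i, B i i = 0) ∧ ∀ X ∈ C, d - 1 < (B - X).rank := by
  obtain ⟨X₀, hX₀, Y₀, hY₀, hne, hrk⟩ := hex
  have hdn : 2 * d ≤ n := by
    have h1 := Matrix.rank_le_card_width (X₀ - Y₀)
    rw [hrk, Fintype.card_fin] at h1
    exact h1
  have hdk : d + (n - d) = n := by omega
  let e : Fin d ⊕ Fin (n - d) ≃ Fin n := finSumFinEquiv.trans (finCongr hdk)
  let A : Matrix (Fin n) (Fin n) F :=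
    Matrix.reindex e e (Matrix.fromBlocks (Jmat F hdeven) 0 0 0)
  have hArank : A.rank = d := by
    show (Matrix.reindex e e _).rank = d
    rw [Matrix.rank_reindex, rank_fromBlocks_zero, Jmat_rank]
  have hJ : ∀ a b : Fin d, (Jmat F hdeven) b a = -(Jmat F hdeven a b) := fun a b =>
    Matrix.ext_iff.mpr (Jmat_transpose F hdeven) a b
  have hAt : Aᵀ = -A := by
    ext i j
    simp only [Matrix.transpose_apply, Matrix.neg_apply, A, Matrix.reindex_apply,
      Matrix.submatrix_apply]
    rcases e.symm i with a | a <;> rcases e.symm j with b | b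
    · simpa [Matrix.fromBlocks] using hJ a b
    · simp [Matrix.fromBlocks]
    · simp [Matrix.fromBlocks]
    · simp [Matrix.fromBlocks]
  have hAd : ∀ i, A i i = 0 := by
    intro i
    show Matrix.fromBlocks (Jmat F hdeven) 0 0 0 (e.symm i) (e.symm i) = 0
    rcases e.symm i with a | a
    · simp [Matrix.fromBlocks, Jmat_diag]
    · simp [Matrix.fromBlocks]
  refine ⟨X₀ + A, ⟨?_, ?_⟩, ?_⟩
  · rw [Matrix.transpose_add, (hCalt X₀ hX₀).1, hAt, neg_add]
  · intro i
    simp [Matrix.add_apply, (hCalt X₀ hX₀).2 i, hAd i]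
  · intro X hX
    by_cases hxx : X = X₀
    · have hBA : X₀ + A - X = A := by rw [hxx]; abel
      rw [hBA, hArank]
      omega
    · have h2d := hmin X₀ hX₀ X hX (fun h => hxx h.symm)
      have hsplit : X₀ - X = (X₀ + A - X) + (-A) := by abel
      have hu : IsUnit ((-1 : Matrix (Fin n) (Fin n) F)).det :=
        (Matrix.isUnit_iff_isUnit_det _).mp isUnit_one.neg
      have hneg : (-A).rank = A.rank := by
        calc (-A).rank = ((-1 : Matrix (Fin n) (Fin n) F) * A).rank := by rw [neg_one_mul]
          _ = A.rank := Matrix.rank_mul_eq_right_of_isUnit_det _ _ hu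
      have hle := matrix_rank_add_le (X₀ + A - X) (-A)
      rw [← hsplit, hneg, hArank] at hle
      omega
end

section
/- Let n be even, and let C ⊆ Alt_n(F_q) with |C| ≥ 2 be such that any two distinct X, Y ∈ C satisfy rank(X − Y) ≥ 2d. Then, as rational numbers, d ≤ n/2 + (1 − |C| · q^{1−n})/(|C| − 1). In particular, if d > n/2 − q^{1−n}, then |C| ≤ (d − n/2 + 1)/(d − n/2 + q^{1−n}). -/
open Matrix
open Finset


lemma alt_orth {F : Type*} [Field F] {n : ℕ} (A : Matrix (Fin n) (Fin n) F)
    (h1 : Aᵀ = -A) (h2 : ∀ i, A i i = 0) (v : Fin n → F) : v ⬝ᵥ A.mulVec v = 0 := by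
  have hAsym : ∀ i j, A j i = -A i j := fun i j => by
    have := congrFun (congrFun h1 i) j
    simpa [Matrix.transpose_apply] using this
  have hrw : v ⬝ᵥ A.mulVec v = ∑ p : Fin n × Fin n, v p.1 * (A p.1 p.2 * v p.2) := by
    simp [dotProduct, Matrix.mulVec, Finset.mul_sum, Fintype.sum_prod_type]
  rw [hrw]
  apply Finset.sum_ninvolution (fun p => (p.2, p.1))
  · intro p
    rw [hAsym p.1 p.2]; ring
  · intro p h hgp
    have h12 : p.2 = p.1 := congrArg Prod.fst hgp
    apply h
    rw [← h12, h2]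
    ring
  · intro a; simp
  · intro a; simp

lemma card_hyp {F : Type*} [Field F] [Fintype F] [DecidableEq F] {n : ℕ} {v : Fin n → F}
    (hv : v ≠ 0) :
    (Finset.univ.filter (fun w : Fin n → F => v ⬝ᵥ w = 0)).card = Fintype.card F ^ (n - 1) := by
  classical
  let φ : (Fin n → F) →ₗ[F] F :=
    { toFun := fun w => v ⬝ᵥ w
      map_add' := fun x y => dotProduct_add v x y
      map_smul' := fun c x => by simp [dotProduct_smul] }
  have hφ : φ ≠ 0 := by
    obtain ⟨i, hi⟩ := Function.ne_iff.mp hv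
    simp only [Pi.zero_apply] at hi
    intro h
    apply hi
    have := congrFun (congrArg (fun f : (Fin n → F) →ₗ[F] F => f.toFun) h) (Pi.single i 1)
    simpa [φ, dotProduct_single] using this
  have hsurj : Function.Surjective φ := LinearMap.surjective_of_ne_zero hφ
  have hrange : LinearMap.range φ = ⊤ := LinearMap.range_eq_top.mpr hsurj
  have hrn := LinearMap.finrank_range_add_finrank_ker φ
  rw [hrange, finrank_top] at hrn
  have h1 : Module.finrank F F = 1 := Module.finrank_self F
  have hpi : Module.finrank F (Fin n → F) = n := by simp [Module.finrank_pi]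
  rw [h1, hpi] at hrn
  have hker : Module.finrank F (LinearMap.ker φ) = n - 1 := by omega
  have hcard : Fintype.card (LinearMap.ker φ) = Fintype.card F ^ (n - 1) := by
    rw [Module.card_eq_pow_finrank (K := F) (V := LinearMap.ker φ), hker]
  rw [← hcard, Fintype.card_subtype]
  congr 1
  ext w
  simp [LinearMap.mem_ker, φ]

lemma card_ker_matrix {F : Type*} [Field F] [Fintype F] [DecidableEq F] {n : ℕ}
    (A : Matrix (Fin n) (Fin n) F) :
    (Finset.univ.filter (fun w : Fin n → F => A.mulVec w = 0)).card
      = Fintype.card F ^ (n - A.rank) := by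
  classical
  have hrn := LinearMap.finrank_range_add_finrank_ker A.mulVecLin
  have hpi : Module.finrank F (Fin n → F) = n := by simp [Module.finrank_pi]
  rw [hpi] at hrn
  have hrank : A.rank = Module.finrank F (LinearMap.range A.mulVecLin) := rfl
  have hker : Module.finrank F (LinearMap.ker A.mulVecLin) = n - A.rank := by omega
  have hcard : Fintype.card (LinearMap.ker A.mulVecLin) = Fintype.card F ^ (n - A.rank) := by
    rw [Module.card_eq_pow_finrank (K := F) (V := LinearMap.ker A.mulVecLin), hker]
  rw [← hcard, Fintype.card_subtype]
  congr 1
  ext w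
  simp [LinearMap.mem_ker]

lemma swap_count {α β : Type*} [DecidableEq α] [DecidableEq β]
    (u : Finset α) (t : Finset β) (R : α → β → Prop) [∀ a b, Decidable (R a b)] :
    ∑ b ∈ t, (u.filter (fun a => R a b)).card = ∑ a ∈ u, (t.filter (fun b => R a b)).card := by
  simp only [Finset.card_filter]
  exact Finset.sum_comm

lemma lower_v {F : Type*} [Field F] [Fintype F] [DecidableEq F] {n : ℕ}
    (s : Finset (Matrix (Fin n) (Fin n) F))
    (halt : ∀ X ∈ s, Xᵀ = -X ∧ ∀ i, X i i = 0) {v : Fin n → F} (hv : v ≠ 0) :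
    s.card ^ 2 ≤ Fintype.card F ^ (n - 1) *
      ((s ×ˢ s).filter (fun p => p.1.mulVec v = p.2.mulVec v)).card := by
  classical
  set H : Finset (Fin n → F) := Finset.univ.filter (fun w => v ⬝ᵥ w = 0) with hH
  set f : (Fin n → F) → ℕ := fun w => (s.filter (fun X => X.mulVec v = w)).card with hf
  have hmem : ∀ X ∈ s, X.mulVec v ∈ H := by
    intro X hX
    simp only [hH, Finset.mem_filter, Finset.mem_univ, true_and]
    exact alt_orth X (halt X hX).1 (halt X hX).2 v
  have hsum : ∑ w ∈ H, f w = s.card :=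
    (Finset.card_eq_sum_card_fiberwise hmem).symm
  -- sum of squares over H is at most the pair count
  set P : (Fin n → F) → Finset (Matrix (Fin n) (Fin n) F × Matrix (Fin n) (Fin n) F) :=
    fun w => (s.filter (fun X => X.mulVec v = w)) ×ˢ (s.filter (fun X => X.mulVec v = w)) with hP
  have hdisj : ∀ w1 ∈ H, ∀ w2 ∈ H, w1 ≠ w2 → Disjoint (P w1) (P w2) := by
    intro w1 _ w2 _ hne
    rw [Finset.disjoint_left]
    rintro ⟨X, Y⟩ h1 h2
    simp only [hP, Finset.mem_product, Finset.mem_filter] at h1 h2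
    exact hne (h1.1.2 ▸ h2.1.2.symm ▸ rfl)
  have hsub : H.biUnion P ⊆ (s ×ˢ s).filter (fun p => p.1.mulVec v = p.2.mulVec v) := by
    intro p hp
    simp only [Finset.mem_biUnion] at hp
    obtain ⟨w, _, hw⟩ := hp
    simp only [hP, Finset.mem_product, Finset.mem_filter] at hw
    simp only [Finset.mem_filter, Finset.mem_product]
    exact ⟨⟨hw.1.1, hw.2.1⟩, by rw [hw.1.2, hw.2.2]⟩
  have hsq : ∑ w ∈ H, (f w) ^ 2 ≤
      ((s ×ˢ s).filter (fun p => p.1.mulVec v = p.2.mulVec v)).card := by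
    calc ∑ w ∈ H, (f w) ^ 2 = ∑ w ∈ H, (P w).card := by
          apply Finset.sum_congr rfl
          intro w _
          rw [hP, Finset.card_product, sq]
      _ = (H.biUnion P).card := (Finset.card_biUnion hdisj).symm
      _ ≤ _ := Finset.card_le_card hsub
  have hcs : (∑ w ∈ H, f w) ^ 2 ≤ H.card * ∑ w ∈ H, (f w) ^ 2 :=
    sq_sum_le_card_mul_sum_sq
  rw [hsum] at hcs
  calc s.card ^ 2 ≤ H.card * ∑ w ∈ H, (f w) ^ 2 := hcs
    _ ≤ Fintype.card F ^ (n - 1) *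
        ((s ×ˢ s).filter (fun p => p.1.mulVec v = p.2.mulVec v)).card := by
      rw [hH]
      exact Nat.mul_le_mul (le_of_eq (card_hyp hv)) hsq

lemma pow_aux (q : ℕ) (hq : 2 ≤ q) : ∀ k n : ℕ, k ≤ n → n * q ^ k + k ≤ n + k * q ^ n := by
  intro k
  intro n
  induction n with
  | zero => intro h; have hk0 : k = 0 := Nat.le_zero.mp h; subst hk0; simp
  | succ m ih =>
    intro hk
    rcases Nat.lt_or_ge k (m+1) with h | h
    · have hk' : k ≤ m := by omega
      have := ih hk'
      have h1 : q ^ k ≤ q ^ m := Nat.pow_le_pow_right (by omega) hk'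
      have h2 : q ^ m ≥ 1 := Nat.one_le_pow _ _ (by omega)
      have h3 : k * q ^ (m+1) ≥ k * (2 * q ^ m) := by
        apply Nat.mul_le_mul_left
        rw [pow_succ]
        calc 2 * q ^ m = q ^ m * 2 := by ring
          _ ≤ q ^ m * q := Nat.mul_le_mul_left _ hq
      rcases Nat.eq_zero_or_pos k with hk0 | hk1
      · subst hk0; simp
      · nlinarith
    · have : k = m + 1 := by omega
      subst this
      nlinarith [Nat.one_le_pow (m+1) q (by omega : 0 < q)]


/-- Total distance bound, `n` even: if `C ⊆ Alt_n(F_q)` has `|C| ≥ 2` and any two distinct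
codewords are at rank distance at least `2d`, then
`d ≤ n/2 + (1 − |C|·q^{1−n})/(|C| − 1)`; in particular, if `d > n/2 − q^{1−n}` then
`|C| ≤ (d − n/2 + 1)/(d − n/2 + q^{1−n})`. -/
theorem total_distance_bound_even
    {F : Type*} [Field F] [Fintype F] {n d : ℕ} (hn : Even n)
    (C : Set (Matrix (Fin n) (Fin n) F))
    (hCalt : ∀ X ∈ C, Xᵀ = -X ∧ ∀ i, X i i = 0)
    (hcard : 2 ≤ Nat.card C)
    (hdist : ∀ X ∈ C, ∀ Y ∈ C, X ≠ Y → 2 * d ≤ (X - Y).rank) :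
    ((d : ℚ) ≤ (n : ℚ) / 2 +
        (1 - (Nat.card C : ℚ) * (Fintype.card F : ℚ) ^ ((1 : ℤ) - (n : ℤ))) /
          ((Nat.card C : ℚ) - 1)) ∧
    ((n : ℚ) / 2 - (Fintype.card F : ℚ) ^ ((1 : ℤ) - (n : ℤ)) < (d : ℚ) →
      (Nat.card C : ℚ) ≤
        ((d : ℚ) - (n : ℚ) / 2 + 1) /
          ((d : ℚ) - (n : ℚ) / 2 + (Fintype.card F : ℚ) ^ ((1 : ℤ) - (n : ℤ)))) := by
  classical
  set q := Fintype.card F with hqdef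
  have hq2 : 2 ≤ q := Fintype.one_lt_card
  haveI : Fintype C := (Set.toFinite C).fintype
  set s : Finset (Matrix (Fin n) (Fin n) F) := C.toFinset with hsdef
  have hscard : Nat.card C = s.card := by
    rw [Nat.card_eq_fintype_card, Set.toFinset_card]
  set M := s.card with hMdef
  have hM2 : 2 ≤ M := hscard ▸ hcard
  have hmem : ∀ X, X ∈ s ↔ X ∈ C := fun X => Set.mem_toFinset
  obtain ⟨X0, hX0, Y0, hY0, hXY0⟩ := Finset.one_lt_card.mp (by omega : 1 < s.card)
  have hn0 : n ≠ 0 := by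
    rintro rfl
    exact hXY0 (by ext i j; exact i.elim0)
  have hn2 : 2 ≤ n := by
    obtain ⟨r, hr⟩ := hn; omega
  have hdn : 2 * d ≤ n := by
    have h1 := hdist X0 ((hmem X0).mp hX0) Y0 ((hmem Y0).mp hY0) hXY0
    exact h1.trans ((X0 - Y0).rank_le_card_width.trans (by simp))
  have halt' : ∀ X ∈ s, Xᵀ = -X ∧ ∀ i, X i i = 0 := fun X hX => hCalt X ((hmem X).mp hX)
  -- the total count
  set T := ∑ v : Fin n → F, ((s ×ˢ s).filter (fun p => p.1.mulVec v = p.2.mulVec v)).card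
    with hTdef
  have hcardfun : Fintype.card (Fin n → F) = q ^ n := by
    simp [hqdef]
  -- lower bound
  have hT0 : ((s ×ˢ s).filter
      (fun p => p.1.mulVec (0 : Fin n → F) = p.2.mulVec (0 : Fin n → F))).card = M ^ 2 := by
    rw [Finset.filter_true_of_mem (fun p _ => by simp [Matrix.mulVec_zero]),
      Finset.card_product, sq]
  have hlow : q ^ (n - 1) * M ^ 2 + (q ^ n - 1) * M ^ 2 ≤ q ^ (n - 1) * T := by
    have hsplit : T = ((s ×ˢ s).filter
        (fun p => p.1.mulVec (0 : Fin n → F) = p.2.mulVec (0 : Fin n → F))).card +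
        ∑ v ∈ Finset.univ.erase (0 : Fin n → F),
          ((s ×ˢ s).filter (fun p => p.1.mulVec v = p.2.mulVec v)).card :=
      (Finset.add_sum_erase Finset.univ _ (Finset.mem_univ 0)).symm
    have herasecard : (Finset.univ.erase (0 : Fin n → F)).card = q ^ n - 1 := by
      rw [Finset.card_erase_of_mem (Finset.mem_univ 0), Finset.card_univ, hcardfun]
    have hbound : (q ^ n - 1) * M ^ 2 ≤
        ∑ v ∈ Finset.univ.erase (0 : Fin n → F),
          q ^ (n - 1) * ((s ×ˢ s).filter (fun p => p.1.mulVec v = p.2.mulVec v)).card := by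
      rw [← herasecard]
      have := Finset.card_nsmul_le_sum (Finset.univ.erase (0 : Fin n → F))
        (fun v => q ^ (n - 1) * ((s ×ˢ s).filter
          (fun p => p.1.mulVec v = p.2.mulVec v)).card) (M ^ 2)
        (fun v hv => lower_v s halt' (Finset.ne_of_mem_erase hv))
      simpa [smul_eq_mul] using this
    calc q ^ (n - 1) * M ^ 2 + (q ^ n - 1) * M ^ 2
        ≤ q ^ (n - 1) * M ^ 2 + ∑ v ∈ Finset.univ.erase (0 : Fin n → F),
            q ^ (n - 1) * ((s ×ˢ s).filter (fun p => p.1.mulVec v = p.2.mulVec v)).card :=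
          Nat.add_le_add_left hbound _
      _ = q ^ (n - 1) * T := by
          rw [hsplit, Nat.mul_add, hT0, Finset.mul_sum]
  -- upper bound
  have hswap : T = ∑ p ∈ s ×ˢ s,
      (Finset.univ.filter (fun v => p.1.mulVec v = p.2.mulVec v)).card :=
    swap_count (s ×ˢ s) Finset.univ (fun p v => p.1.mulVec v = p.2.mulVec v)
  have hup : n * T + (M * M - M) * (2 * d * (q ^ n - 1)) ≤
      M * (n * q ^ n) + (M * M - M) * (n + n * (q ^ n - 1)) := by
    rw [hswap, ← Finset.diag_union_offDiag s,
      Finset.sum_union (Finset.disjoint_diag_offDiag s)]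
    have hdiag : ∑ p ∈ s.diag,
        (Finset.univ.filter (fun v => p.1.mulVec v = p.2.mulVec v)).card = M * q ^ n := by
      have hcong : ∀ p ∈ s.diag,
          (Finset.univ.filter (fun v => p.1.mulVec v = p.2.mulVec v)).card = q ^ n := by
        intro p hp
        have hpe : p.1 = p.2 := (Finset.mem_diag.mp hp).2
        rw [Finset.filter_true_of_mem (fun v _ => by rw [hpe]), Finset.card_univ, hcardfun]
      rw [Finset.sum_congr rfl hcong, Finset.sum_const, smul_eq_mul, Finset.diag_card]
    have hoffcard : s.offDiag.card = M * M - M := by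
      rw [Finset.offDiag_card]
    have hoff : ∀ p ∈ s.offDiag,
        n * (Finset.univ.filter (fun v => p.1.mulVec v = p.2.mulVec v)).card
          + 2 * d * (q ^ n - 1) ≤ n + n * (q ^ n - 1) := by
      intro p hp
      obtain ⟨hp1, hp2, hpne⟩ := Finset.mem_offDiag.mp hp
      have hfe : (Finset.univ.filter (fun v => p.1.mulVec v = p.2.mulVec v)) =
          (Finset.univ.filter (fun v => (p.1 - p.2).mulVec v = 0)) := by
        apply Finset.filter_congr
        intro v _
        rw [Matrix.sub_mulVec, sub_eq_zero]
      rw [hfe, card_ker_matrix]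
      set k := n - (p.1 - p.2).rank with hk
      have hrk : 2 * d ≤ (p.1 - p.2).rank :=
        hdist p.1 ((hmem p.1).mp hp1) p.2 ((hmem p.2).mp hp2) hpne
      have hkn : k ≤ n := Nat.sub_le _ _
      have hk2d : k + 2 * d ≤ n := by
        have := ((p.1 - p.2).rank_le_card_width.trans (by simp : Fintype.card (Fin n) ≤ n))
        omega
      have hpa := pow_aux q hq2 k n hkn
      have hb1 : 1 ≤ q ^ n := Nat.one_le_pow _ _ (by omega)
      have hq_eq : k * (q ^ n - 1) + k = k * q ^ n := by
        obtain ⟨c, hc⟩ := Nat.exists_eq_add_of_le hb1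
        rw [hc, Nat.add_sub_cancel_left]
        ring
      have h6 : n * q ^ k ≤ n + k * (q ^ n - 1) := by
        rw [← hq_eq] at hpa
        linarith
      have h7 : k * (q ^ n - 1) + 2 * d * (q ^ n - 1) ≤ n * (q ^ n - 1) := by
        calc k * (q ^ n - 1) + 2 * d * (q ^ n - 1) = (k + 2 * d) * (q ^ n - 1) := by ring
          _ ≤ n * (q ^ n - 1) := Nat.mul_le_mul_right _ hk2d
      linarith
    calc n * (∑ p ∈ s.diag, _ + ∑ p ∈ s.offDiag, _) + (M * M - M) * (2 * d * (q ^ n - 1))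
        = n * (M * q ^ n) + (∑ p ∈ s.offDiag,
            (n * (Finset.univ.filter (fun v => p.1.mulVec v = p.2.mulVec v)).card
              + 2 * d * (q ^ n - 1))) := by
          rw [hdiag, Finset.sum_add_distrib, Finset.sum_const, smul_eq_mul, hoffcard,
            ← Finset.mul_sum]
          ring
      _ ≤ n * (M * q ^ n) + ∑ p ∈ s.offDiag, (n + n * (q ^ n - 1)) :=
          Nat.add_le_add_left (Finset.sum_le_sum hoff) _
      _ = M * (n * q ^ n) + (M * M - M) * (n + n * (q ^ n - 1)) := by
          rw [Finset.sum_const, smul_eq_mul, hoffcard]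
          ring
  -- move to ℚ
  have hb1 : (1 : ℕ) ≤ q ^ n := Nat.one_le_pow _ _ (by omega)
  have hMM : M ≤ M * M := Nat.le_mul_of_pos_left _ (by omega)
  set ε : ℚ := (q : ℚ) ^ ((1 : ℤ) - (n : ℤ)) with hε
  set P : ℚ := (q : ℚ) ^ (n - 1) with hP
  set N : ℚ := (q : ℚ) ^ n with hN
  have hq0 : (0 : ℚ) < (q : ℚ) := by positivity
  have hP0 : (0 : ℚ) < P := by positivity
  have hN2 : (2 : ℚ) ≤ N := by
    have hq1 : (1 : ℚ) ≤ (q : ℚ) := by exact_mod_cast (by omega : (1 : ℕ) ≤ q)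
    calc (2 : ℚ) ≤ (q : ℚ) := by exact_mod_cast hq2
      _ = (q : ℚ) ^ 1 := (pow_one _).symm
      _ ≤ (q : ℚ) ^ n := by
          first
          | exact pow_le_pow_right₀ hq1 (by omega)
          | exact pow_le_pow_right₀ hq1 (by omega)
  have hεP : ε * P = 1 := by
    have h1 : ((1 : ℤ) - (n : ℤ)) = -((n - 1 : ℕ) : ℤ) := by
      push_cast [Nat.cast_sub (by omega : 1 ≤ n)]; ring
    rw [hε, hP, h1, _root_.zpow_neg, _root_.zpow_natCast]
    exact inv_mul_cancel₀ (by positivity)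
  have hlowQ : P * (M : ℚ) ^ 2 + (N - 1) * (M : ℚ) ^ 2 ≤ P * (T : ℚ) := by
    have := hlow
    have hcast : ((q ^ (n - 1) * M ^ 2 + (q ^ n - 1) * M ^ 2 : ℕ) : ℚ)
        ≤ ((q ^ (n - 1) * T : ℕ) : ℚ) := by exact_mod_cast this
    push_cast [Nat.cast_sub hb1] at hcast
    convert hcast using 2 <;> push_cast <;> ring
  have hupQ : (n : ℚ) * T + ((M : ℚ) * M - M) * (2 * d * (N - 1)) ≤
      (M : ℚ) * (n * N) + ((M : ℚ) * M - M) * (n + n * (N - 1)) := by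
    have hcast : ((n * T + (M * M - M) * (2 * d * (q ^ n - 1)) : ℕ) : ℚ) ≤
        ((M * (n * q ^ n) + (M * M - M) * (n + n * (q ^ n - 1)) : ℕ) : ℚ) := by
      exact_mod_cast hup
    push_cast [Nat.cast_sub hb1, Nat.cast_sub hMM] at hcast
    convert hcast using 2 <;> push_cast <;> ring
  -- key inequality
  clear_value T
  clear hTdef hswap hT0 hlow hup
  have hM0 : (0 : ℚ) < M := by positivity
  have hchain : (n : ℚ) * (M : ℚ) ^ 2 * (N - 1) ≤
      P * ((M : ℚ) * (N - 1) * n + (M : ℚ) * ((M : ℚ) - 1) * (N - 1) * (n - 2 * d)) := by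
    have h1 : (n : ℚ) * (P * (M : ℚ) ^ 2 + (N - 1) * (M : ℚ) ^ 2) ≤ (n : ℚ) * (P * T) :=
      mul_le_mul_of_nonneg_left hlowQ (by positivity)
    have h2 : P * ((n : ℚ) * T + ((M : ℚ) * M - M) * (2 * d * (N - 1))) ≤
        P * ((M : ℚ) * (n * N) + ((M : ℚ) * M - M) * (n + n * (N - 1))) :=
      mul_le_mul_of_nonneg_left hupQ (le_of_lt hP0)
    ring_nf at h1 h2 ⊢
    linarith
  have hKEY : (n : ℚ) * M * ε ≤ (n : ℚ) + ((M : ℚ) - 1) * ((n : ℚ) - 2 * d) := by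
    have hN1 : (0 : ℚ) < N - 1 := by linarith
    have hstep : ((n : ℚ) * M * ε) * (P * M * (N - 1)) ≤
        ((n : ℚ) + ((M : ℚ) - 1) * ((n : ℚ) - 2 * d)) * (P * M * (N - 1)) := by
      have e1 : ((n : ℚ) * M * ε) * (P * M * (N - 1)) =
          (ε * P) * ((n : ℚ) * (M : ℚ) ^ 2 * (N - 1)) := by ring
      have e2 : ((n : ℚ) + ((M : ℚ) - 1) * ((n : ℚ) - 2 * d)) * (P * M * (N - 1)) =
          P * ((M : ℚ) * (N - 1) * n + (M : ℚ) * ((M : ℚ) - 1) * (N - 1) * (n - 2 * d)) := by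
        ring
      rw [e1, e2, hεP, one_mul]
      exact hchain
    exact le_of_mul_le_mul_right hstep (by positivity)
  -- key distilled inequality
  have hM1 : (0 : ℚ) < (M : ℚ) - 1 := by
    have : (2 : ℚ) ≤ (M : ℚ) := by exact_mod_cast hM2
    linarith
  have hε0 : (0 : ℚ) < ε := by positivity
  have hdnQ : 2 * (d : ℚ) ≤ (n : ℚ) := by exact_mod_cast hdn
  have hn2Q : (2 : ℚ) ≤ (n : ℚ) := by exact_mod_cast hn2
  clear_value ε P N M s q
  have hkey2 : ((d : ℚ) - (n : ℚ) / 2) * ((M : ℚ) - 1) ≤ 1 - (M : ℚ) * ε := by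
    rcases le_or_gt 0 (1 - (M : ℚ) * ε) with hu | hu
    · have h1 : (d : ℚ) - (n : ℚ) / 2 ≤ 0 := by linarith
      have h2 := mul_nonneg (neg_nonneg.2 h1) hM1.le
      linarith [h2, hu]
    · have h3 : (n : ℚ) * (1 - (M : ℚ) * ε) ≤ 2 * (1 - (M : ℚ) * ε) := by
        have h4 := mul_nonpos_of_nonneg_of_nonpos
          (by linarith : (0 : ℚ) ≤ (n : ℚ) - 2) hu.le
        linarith [h4]
      linarith [hKEY, h3]
  rw [hscard]
  constructor
  · rw [← sub_le_iff_le_add', le_div_iff₀ hM1]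
    exact hkey2
  · intro hlt
    have hpos : 0 < (d : ℚ) - (n : ℚ) / 2 + ε := by linarith
    rw [le_div_iff₀ hpos]
    linarith [hkey2]
end
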